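/- arXiv:1405.0107 — 10 statements merged into one kernel-verified Lean document; each statement's English description precedes it below -/
import Mathlib

section
/- Let $\sigma = (a_1, \dots, a_s)$ be a partition of $r$ with $a_1 \ge a_2 \ge \dots \ge a_s \ge 1$, and let $q \ge a_1$ and $n \ge s$. Then for every $k$ with $1 \le k \le r-1$ there exists a $(q,k,\sigma)$-feasible sequence, i.e., a nonincreasing sequence $b_1 \ge b_2 \ge \dots \ge b_n \ge 0$ of nonnegative integers with $b_j = b_s$ for all $j \ge s$, $q \ge \max\{a_1, b_1\}$, and $\sum_{i=1}^{s} \min\{a_i, b_i\} = k$. -/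
/-! The function `F c = ∑ i, min (a i) c` climbs from `F 0 = 0` to `F (a 1) = r`, and
`F (c + 1) - F c` counts the parts exceeding `c`, which form an initial segment of the
partition. So for `F c ≤ k < F (c + 1)` one reaches `k` by raising the first `k - F c`
entries of the constant sequence `c` to `c + 1`. -/

open Finset

theorem exists_le_lt_succ_of_le_of_lt {α : Type*} [LinearOrder α] (f : ℕ → α) {x : α} {m : ℕ}
    (h0 : f 0 ≤ x) (hm : x < f m) : ∃ c < m, f c ≤ x ∧ x < f (c + 1) := by
  induction m with
  | zero => exact absurd hm h0.not_gt
  | succ m ih =>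
    by_cases hxm : x < f m
    · obtain ⟨c, hcm, hc⟩ := ih hxm
      exact ⟨c, hcm.trans m.lt_succ_self, hc⟩
    · exact ⟨m, m.lt_succ_self, not_lt.mp hxm, hm⟩

theorem sum_min_succ {ι : Type*} (s : Finset ι) (a : ι → ℕ) (c : ℕ) :
    ∑ i ∈ s, min (a i) (c + 1) = ∑ i ∈ s, min (a i) c + #{i ∈ s | c < a i} := by
  rw [card_filter, ← sum_add_distrib]
  exact sum_congr rfl fun i _ => by split_ifs <;> omega

theorem lt_apply_of_le_card_filter_lt {a : ℕ → ℕ} {s c i : ℕ}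
    (ha : AntitoneOn a (Set.Icc 1 s)) (hi1 : 1 ≤ i) (hi : i ≤ #{j ∈ Icc 1 s | c < a j}) :
    c < a i := by
  by_contra hai
  have his : i ≤ s := hi.trans ((card_filter_le _ _).trans (by simp))
  have hsub : {j ∈ Icc 1 s | c < a j} ⊆ Icc 1 (i - 1) := by
    intro j hj
    simp only [mem_filter, mem_Icc] at hj ⊢
    refine ⟨hj.1.1, Nat.le_sub_one_of_lt (lt_of_not_ge fun hij => ?_)⟩
    exact hai (hj.2.trans_le (ha ⟨hi1, his⟩ ⟨hj.1.1, hj.1.2⟩ hij))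
  have := (card_le_card hsub).trans_eq (Nat.card_Icc 1 (i - 1))
  omega

theorem sum_min_add_ite_eq_add {a : ℕ → ℕ} {s c d : ℕ} (ha : AntitoneOn a (Set.Icc 1 s))
    (hd : d ≤ #{j ∈ Icc 1 s | c < a j}) :
    ∑ i ∈ Icc 1 s, min (a i) (c + if i ≤ d then 1 else 0) = ∑ i ∈ Icc 1 s, min (a i) c + d := by
  have hds : d ≤ s := hd.trans ((card_filter_le _ _).trans (by simp))
  have hterm : ∀ i ∈ Icc 1 s,
      min (a i) (c + if i ≤ d then 1 else 0) = min (a i) c + if i ≤ d then 1 else 0 := by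
    intro i hi
    split_ifs with hid
    · have := lt_apply_of_le_card_filter_lt ha (mem_Icc.mp hi).1 (hid.trans hd)
      omega
    · simp
  have hcount : #{i ∈ Icc 1 s | i ≤ d} = d := by
    rw [show {i ∈ Icc 1 s | i ≤ d} = Icc 1 d by ext i; simp only [mem_filter, mem_Icc]; omega]
    simp
  rw [sum_congr rfl hterm, sum_add_distrib, ← card_filter, hcount]

theorem stmt_4_general (r s n q : ℕ) (a : ℕ → ℕ)
    (hamono : ∀ i j, 1 ≤ i → i ≤ j → j ≤ s → a j ≤ a i)
    (hsum : ∑ i ∈ Finset.Icc 1 s, a i = r)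
    (hq : a 1 ≤ q) :
    ∀ k, 1 ≤ k → k ≤ r - 1 →
      ∃ b : ℕ → ℕ,
        (∀ i j, 1 ≤ i → i ≤ j → j ≤ n → b j ≤ b i) ∧
        (∀ j, s ≤ j → j ≤ n → b j = b s) ∧
        b 1 ≤ q ∧
        ∑ i ∈ Finset.Icc 1 s, min (a i) (b i) = k := by
  intro k hk1 hkr
  have ha : AntitoneOn a (Set.Icc 1 s) := fun i hi j hj hij => hamono i j hi.1 hij hj.2
  have hFa1 : ∑ i ∈ Icc 1 s, min (a i) (a 1) = r :=
    hsum ▸ sum_congr rfl fun i hi => min_eq_left <| hamono 1 i le_rfl (mem_Icc.mp hi).1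
      (mem_Icc.mp hi).2
  obtain ⟨c, hca, hFc, hFc1⟩ := exists_le_lt_succ_of_le_of_lt
    (fun c => ∑ i ∈ Icc 1 s, min (a i) c) (x := k) (m := a 1) (by simp) (by omega)
  rw [sum_min_succ] at hFc1
  set d := k - ∑ i ∈ Icc 1 s, min (a i) c
  have hcount : #{i ∈ Icc 1 s | c < a i} ≤ s := (card_filter_le _ _).trans (by simp)
  have hsteps := sum_min_add_ite_eq_add (c := c) (d := d) ha (by omega)
  refine ⟨fun i => c + if i ≤ d then 1 else 0, fun i j _ hij _ => ?_, fun j hsj _ => ?_, ?_, ?_⟩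
  all_goals dsimp only
  · split_ifs <;> omega
  · split_ifs <;> omega
  · split_ifs <;> omega
  · omega

theorem stmt_4 (r s n q : ℕ) (a : ℕ → ℕ)
    (hs : 1 ≤ s)
    (hapos : ∀ i, 1 ≤ i → i ≤ s → 1 ≤ a i)
    (hamono : ∀ i j, 1 ≤ i → i ≤ j → j ≤ s → a j ≤ a i)
    (hsum : ∑ i ∈ Finset.Icc 1 s, a i = r)
    (hq : a 1 ≤ q) (hn : s ≤ n) :
    ∀ k, 1 ≤ k → k ≤ r - 1 →
      ∃ b : ℕ → ℕ,
        (∀ i j, 1 ≤ i → i ≤ j → j ≤ n → b j ≤ b i) ∧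
        (∀ j, s ≤ j → j ≤ n → b j = b s) ∧
        b 1 ≤ q ∧
        ∑ i ∈ Finset.Icc 1 s, min (a i) (b i) = k :=
  stmt_4_general r s n q a hamono hsum hq
end

section
/- Let $H = H(n, r, q \mid \sigma)$ be a $\sigma$-hypergraph with $\sigma = (a_1,\dots,a_s)$, $n \ge s$, $q \ge r$. If $r$ divides $q$, then $H$ has a perfect matching: there exist $\frac{nq}{r}$ pairwise disjoint edges covering all $nq$ vertices. -/
/-- `K` is an edge of the σ-hypergraph `H(n,r,q | σ)` (with σ given by `a : Fin s → ℕ`):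
the multiset of nonzero cardinalities `|K ∩ V_i|` equals the multiset of parts of σ. -/
def isEdge {n q s : ℕ} (a : Fin s → ℕ) (K : Finset (Fin n × Fin q)) : Prop :=
  Multiset.filter (fun x => x ≠ 0)
      (Multiset.map (fun i => (K.filter (fun v => v.1 = i)).card)
        (Finset.univ : Finset (Fin n)).val)
    = Multiset.map a (Finset.univ : Finset (Fin s)).val

/-- `M` is a matching: a collection of pairwise disjoint edges. -/
def isMatching {n q s : ℕ} (a : Fin s → ℕ) (M : Finset (Finset (Fin n × Fin q))) : Prop :=
  (∀ E ∈ M, isEdge a E) ∧ ∀ E ∈ M, ∀ F ∈ M, E ≠ F → Disjoint E F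

section Aux

variable {n q s m : ℕ} (a : Fin s → ℕ) (hn : s ≤ n)
  (e : Fin m × ((k : Fin s) × Fin (a k)) ≃ Fin q)

/-- The edge based at class `j` in round `t`. -/
def sigEdge (j : Fin n) (t : Fin m) : Finset (Fin n × Fin q) :=
  Finset.univ.image fun x : (k : Fin s) × Fin (a k) => (j + Fin.castLE hn x.1, e (t, x))

lemma mem_sigEdge {j : Fin n} {t : Fin m} {v : Fin n × Fin q} :
    v ∈ sigEdge a hn e j t ↔
      ∃ x : (k : Fin s) × Fin (a k), (j + Fin.castLE hn x.1, e (t, x)) = v := by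
  simp [sigEdge]

lemma sigEdge_inj (j : Fin n) (t : Fin m) :
    Function.Injective fun x : (k : Fin s) × Fin (a k) =>
      ((j + Fin.castLE hn x.1, e (t, x)) : Fin n × Fin q) := by
  intro x x' h
  have h2 : e (t, x) = e (t, x') := congrArg Prod.snd h
  have := e.injective h2
  exact congrArg Prod.snd this

lemma card_sigma_fst (k : Fin s) :
    (Finset.univ.filter fun x : (k' : Fin s) × Fin (a k') => x.1 = k).card = a k := by
  classical
  have himg : (Finset.univ.filter fun x : (k' : Fin s) × Fin (a k') => x.1 = k)
      = Finset.univ.image (fun v : Fin (a k) => (⟨k, v⟩ : (k' : Fin s) × Fin (a k'))) := by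
    ext ⟨k', v⟩
    simp only [Finset.mem_filter, Finset.mem_univ, true_and, Finset.mem_image]
    constructor
    · rintro rfl
      exact ⟨v, rfl⟩
    · rintro ⟨v', h⟩
      cases h
      rfl
  rw [himg, Finset.card_image_of_injective _ sigma_mk_injective, Finset.card_univ,
    Fintype.card_fin]

variable [NeZero n]

lemma card_filter_sigEdge_mem (j : Fin n) (t : Fin m) (k : Fin s) :
    ((sigEdge a hn e j t).filter fun v => v.1 = j + Fin.castLE hn k).card = a k := by
  classical
  rw [sigEdge, Finset.filter_image,
    Finset.card_image_of_injective _ (sigEdge_inj a hn e j t)]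
  have : (Finset.univ.filter fun x : (k' : Fin s) × Fin (a k') =>
        ((j + Fin.castLE hn x.1, e (t, x)) : Fin n × Fin q).1 = j + Fin.castLE hn k)
      = Finset.univ.filter fun x : (k' : Fin s) × Fin (a k') => x.1 = k := by
    ext x
    simp only [Finset.mem_filter, Finset.mem_univ, true_and]
    constructor
    · intro h
      exact Fin.castLE_injective hn (add_left_cancel h)
    · rintro rfl
      rfl
  rw [this, card_sigma_fst]

lemma card_filter_sigEdge_not_mem (j : Fin n) (t : Fin m) (i : Fin n)
    (h : ∀ k : Fin s, j + Fin.castLE hn k ≠ i) :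
    ((sigEdge a hn e j t).filter fun v => v.1 = i).card = 0 := by
  classical
  rw [Finset.card_eq_zero, Finset.filter_eq_empty_iff]
  intro v hv
  rw [mem_sigEdge] at hv
  obtain ⟨x, rfl⟩ := hv
  exact h x.1

lemma isEdge_sigEdge (hapos : ∀ i, 1 ≤ a i) (j : Fin n) (t : Fin m) :
    isEdge a (sigEdge a hn e j t) := by
  classical
  unfold isEdge
  set g : Fin s → Fin n := fun k => j + Fin.castLE hn k with hg
  have ginj : Function.Injective g := by
    intro k k' h
    exact Fin.castLE_injective hn (add_left_cancel h)
  set c : Fin n → ℕ := fun i => ((sigEdge a hn e j t).filter fun v => v.1 = i).card with hc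
  have hsplit := Multiset.filter_add_not (fun i : Fin n => ∃ k : Fin s, g k = i)
    (Finset.univ : Finset (Fin n)).val
  rw [show (Multiset.map (fun i => ((sigEdge a hn e j t).filter fun v => v.1 = i).card)
      (Finset.univ : Finset (Fin n)).val) = Multiset.map c (Finset.univ : Finset (Fin n)).val
      from rfl]
  rw [← hsplit, Multiset.map_add, Multiset.filter_add]
  have h1 : Multiset.filter (fun i : Fin n => ∃ k : Fin s, g k = i)
      (Finset.univ : Finset (Fin n)).val = Multiset.map g (Finset.univ : Finset (Fin s)).val := by
    have hfil : (Finset.univ : Finset (Fin n)).filter (fun i => ∃ k : Fin s, g k = i)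
        = (Finset.univ : Finset (Fin s)).map ⟨g, ginj⟩ := by
      ext i
      simp [eq_comm]
    rw [← Finset.filter_val, hfil, Finset.map_val]
    rfl
  have h2 : Multiset.filter (fun x => x ≠ 0)
      (Multiset.map c (Multiset.filter (fun i : Fin n => ¬∃ k : Fin s, g k = i)
        (Finset.univ : Finset (Fin n)).val)) = 0 := by
    rw [Multiset.filter_eq_nil]
    intro x hx
    rw [Multiset.mem_map] at hx
    obtain ⟨i, hi, rfl⟩ := hx
    rw [Multiset.mem_filter] at hi
    simp only [ne_eq, not_not]
    exact card_filter_sigEdge_not_mem a hn e j t i (fun k hk => hi.2 ⟨k, hk⟩)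
  rw [h1, h2, add_zero, Multiset.map_map]
  have h3 : Multiset.map (c ∘ g) (Finset.univ : Finset (Fin s)).val
      = Multiset.map a (Finset.univ : Finset (Fin s)).val := by
    apply Multiset.map_congr rfl
    intro k _
    exact card_filter_sigEdge_mem a hn e j t k
  rw [h3, Multiset.filter_eq_self]
  intro x hx
  rw [Multiset.mem_map] at hx
  obtain ⟨k, -, rfl⟩ := hx
  exact Nat.one_le_iff_ne_zero.mp (hapos k)

end Aux

theorem stmt_6 (n r q s : ℕ) (a : Fin s → ℕ)
    (hs : 1 ≤ s)
    (hapos : ∀ i, 1 ≤ a i)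
    (hamono : ∀ i j : Fin s, i ≤ j → a j ≤ a i)
    (hsum : ∑ i, a i = r)
    (hn : s ≤ n) (hq : r ≤ q)
    (hdvd : r ∣ q) :
    ∃ M : Finset (Finset (Fin n × Fin q)),
      isMatching a M ∧
      M.card * r = n * q ∧
      ∀ v : Fin n × Fin q, ∃ E ∈ M, v ∈ E := by
  classical
  have hn0 : NeZero n := ⟨by omega⟩
  obtain ⟨m, hm⟩ := hdvd
  have hcard : Fintype.card (Fin m × ((k : Fin s) × Fin (a k))) = q := by
    simp [Fintype.card_sigma, hsum, hm, mul_comm]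
  let e : Fin m × ((k : Fin s) × Fin (a k)) ≃ Fin q := Fintype.equivFinOfCardEq hcard
  have key : ∀ (j j' : Fin n) (t t' : Fin m) (v : Fin n × Fin q),
      v ∈ sigEdge a hn e j t → v ∈ sigEdge a hn e j' t' → j = j' ∧ t = t' := by
    intro j j' t t' v hv hv'
    rw [mem_sigEdge] at hv hv'
    obtain ⟨x, hx⟩ := hv
    obtain ⟨x', hx'⟩ := hv'
    rw [← hx'] at hx
    have h1 : j + Fin.castLE hn x.1 = j' + Fin.castLE hn x'.1 := congrArg Prod.fst hx
    have h2 : e (t, x) = e (t', x') := congrArg Prod.snd hx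
    have h3 := e.injective h2
    have ht : t = t' := congrArg Prod.fst h3
    have hxx : x = x' := congrArg Prod.snd h3
    subst hxx
    exact ⟨add_right_cancel h1, ht⟩
  have hne : ∀ (j : Fin n) (t : Fin m), (sigEdge a hn e j t).Nonempty := by
    intro j t
    refine ⟨_, (mem_sigEdge a hn e).mpr ⟨⟨⟨0, hs⟩, ⟨0, hapos _⟩⟩, rfl⟩⟩
  set F : Fin n × Fin m → Finset (Fin n × Fin q) := fun p => sigEdge a hn e p.1 p.2 with hF
  have Finj : Function.Injective F := by
    intro p p' h
    obtain ⟨v, hv⟩ := hne p.1 p.2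
    have h' : sigEdge a hn e p.1 p.2 = sigEdge a hn e p'.1 p'.2 := h
    have hv' : v ∈ sigEdge a hn e p'.1 p'.2 := h' ▸ hv
    obtain ⟨h1, h2⟩ := key p.1 p'.1 p.2 p'.2 v hv hv'
    exact Prod.ext h1 h2
  refine ⟨Finset.univ.image F, ⟨?_, ?_⟩, ?_, ?_⟩
  · intro E hE
    rw [Finset.mem_image] at hE
    obtain ⟨p, -, rfl⟩ := hE
    exact isEdge_sigEdge a hn e hapos p.1 p.2
  · intro E hE E' hE' hEE'
    rw [Finset.mem_image] at hE hE'
    obtain ⟨p, -, rfl⟩ := hE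
    obtain ⟨p', -, rfl⟩ := hE'
    rw [Finset.disjoint_left]
    intro v hv hv'
    obtain ⟨h1, h2⟩ := key p.1 p'.1 p.2 p'.2 v hv hv'
    exact hEE' (congrArg F (Prod.ext h1 h2))
  · rw [Finset.card_image_of_injective _ Finj, Finset.card_univ]
    simp only [Fintype.card_prod, Fintype.card_fin]
    rw [hm]
    ring
  · intro v
    refine ⟨F (v.1 - Fin.castLE hn (e.symm v.2).2.1, (e.symm v.2).1),
      Finset.mem_image_of_mem _ (Finset.mem_univ _), ?_⟩
    rw [show F (v.1 - Fin.castLE hn (e.symm v.2).2.1, (e.symm v.2).1)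
        = sigEdge a hn e (v.1 - Fin.castLE hn (e.symm v.2).2.1) (e.symm v.2).1 from rfl,
      mem_sigEdge]
    refine ⟨(e.symm v.2).2, ?_⟩
    have h1 : v.1 - Fin.castLE hn (e.symm v.2).2.1 + Fin.castLE hn (e.symm v.2).2.1 = v.1 :=
      sub_add_cancel _ _
    have h2 : e ((e.symm v.2).1, (e.symm v.2).2) = v.2 := by
      rw [show ((e.symm v.2).1, (e.symm v.2).2) = e.symm v.2 from rfl]
      exact e.apply_symm_apply v.2
    rw [h1, h2]
end

section
/- Let $H = H(n, r, q \mid \sigma)$ with $\sigma = (a_1,\dots,a_s)$, $n \ge s$, $q \ge r$. Suppose $d = \gcd(a_1,\dots,a_s) \ge 2$ and $q \equiv t \pmod d$ with $1 \le t \le d-1$. Then every matching of $H$ leaves at least $t$ unmatched vertices in each class, hence at least $tn$ vertices unmatched in total, and consequently $\nu(H) \le \frac{n(q-t)}{r}$, where $\nu(H)$ is the maximum number of pairwise disjoint edges. -/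
lemma aux_le (d t q c : ℕ) (hd : 2 ≤ d) (ht : q % d = t) (htd : t < d)
    (hdvd : d ∣ c) (hcq : c ≤ q) : c ≤ q - t := by
  obtain ⟨k, rfl⟩ := hdvd
  have hm := Nat.div_add_mod q d
  rw [ht] at hm
  set m := q / d with hm'
  have h1 : d * k < d * (m + 1) := by
    calc d * k ≤ q := hcq
    _ = d * m + t := hm.symm
    _ < d * m + d := by omega
    _ = d * (m + 1) := by ring
  have hk : k ≤ m := by
    have := Nat.lt_of_mul_lt_mul_left h1
    omega
  have h2 : d * k ≤ d * m := Nat.mul_le_mul_left d hk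
  exact Nat.le_sub_of_add_le (le_of_le_of_eq (Nat.add_le_add_right h2 t) hm)

lemma edge_card {n q s r : ℕ} (a : Fin s → ℕ) (hsum : ∑ i, a i = r)
    {E : Finset (Fin n × Fin q)} (hE : isEdge a E) : E.card = r := by
  have h1 : E.card = ∑ i : Fin n, (E.filter (fun v => v.1 = i)).card :=
    Finset.card_eq_sum_card_fiberwise (fun x _ => Finset.mem_univ _)
  have h2 : (∑ i : Fin n, (E.filter (fun v => v.1 = i)).card)
      = (Multiset.map (fun i => (E.filter (fun v => v.1 = i)).card)
          (Finset.univ : Finset (Fin n)).val).sum := rfl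
  have h3 : ∀ m : Multiset ℕ, (m.filter (fun x => x ≠ 0)).sum = m.sum := by
    intro m
    induction m using Multiset.induction with
    | empty => simp
    | cons b s ih => by_cases h : b = 0 <;> simp [Multiset.filter_cons, h, ih]
  have h3 := h3 (Multiset.map (fun i => (E.filter (fun v => v.1 = i)).card)
          (Finset.univ : Finset (Fin n)).val)
  rw [h1, h2, ← h3, hE]
  calc (Multiset.map a (Finset.univ : Finset (Fin s)).val).sum = ∑ i, a i := rfl
  _ = r := hsum

lemma edge_dvd {n q s : ℕ} (a : Fin s → ℕ)
    {E : Finset (Fin n × Fin q)} (hE : isEdge a E) (i : Fin n) :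
    (Finset.univ.gcd a) ∣ (E.filter (fun v => v.1 = i)).card := by
  set c := (E.filter (fun v => v.1 = i)).card with hc
  by_cases h0 : c = 0
  · simp [h0]
  · have hmem : c ∈ Multiset.filter (fun x => x ≠ 0)
        (Multiset.map (fun i => (E.filter (fun v => v.1 = i)).card)
          (Finset.univ : Finset (Fin n)).val) := by
      rw [Multiset.mem_filter]
      exact ⟨Multiset.mem_map.mpr ⟨i, by simp, rfl⟩, h0⟩
    rw [hE] at hmem
    obtain ⟨j, _, hj⟩ := Multiset.mem_map.mp hmem
    exact hj ▸ Finset.gcd_dvd (Finset.mem_univ j)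

theorem stmt_7 (n r q s d t : ℕ) (a : Fin s → ℕ)
    (hs : 1 ≤ s)
    (hapos : ∀ i, 1 ≤ a i)
    (hamono : ∀ i j : Fin s, i ≤ j → a j ≤ a i)
    (hsum : ∑ i, a i = r)
    (hn : s ≤ n) (hq : r ≤ q)
    (hd : d = Finset.univ.gcd a) (hd2 : 2 ≤ d)
    (ht : q % d = t) (ht1 : 1 ≤ t) (ht2 : t ≤ d - 1) :
    ∀ M : Finset (Finset (Fin n × Fin q)), isMatching a M →
      (∀ i : Fin n, ((M.biUnion id).filter (fun v => v.1 = i)).card ≤ q - t) ∧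
      n * t ≤ n * q - (M.biUnion id).card ∧
      M.card * r ≤ n * (q - t) := by
  intro M hM
  obtain ⟨hMe, hMd⟩ := hM
  have htd : t < d := by omega
  set T := M.biUnion id with hT
  -- class counts
  have hfilt : ∀ i : Fin n, (T.filter (fun v => v.1 = i)).card
      = ∑ E ∈ M, (E.filter (fun v => v.1 = i)).card := by
    intro i
    rw [hT, Finset.filter_biUnion]
    exact Finset.card_biUnion (fun E hE F hF hEF =>
      Disjoint.mono (Finset.filter_subset _ _) (Finset.filter_subset _ _) (hMd E hE F hF hEF))
  have hdvd : ∀ i : Fin n, d ∣ (T.filter (fun v => v.1 = i)).card := by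
    intro i
    rw [hfilt i]
    exact Finset.dvd_sum fun E hE => hd ▸ edge_dvd a (hMe E hE) i
  have hle : ∀ i : Fin n, (T.filter (fun v => v.1 = i)).card ≤ q := by
    intro i
    have hsub : T.filter (fun v => v.1 = i) ⊆ ({i} : Finset (Fin n)) ×ˢ Finset.univ := by
      intro v hv
      rw [Finset.mem_filter] at hv
      rw [Finset.mem_product]
      simp [hv.2]
    calc (T.filter (fun v => v.1 = i)).card ≤ (({i} : Finset (Fin n)) ×ˢ (Finset.univ : Finset (Fin q))).card :=
        Finset.card_le_card hsub
    _ = q := by simp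
  have part1 : ∀ i : Fin n, (T.filter (fun v => v.1 = i)).card ≤ q - t :=
    fun i => aux_le d t q _ hd2 ht htd (hdvd i) (hle i)
  have hTcard : T.card = ∑ i : Fin n, (T.filter (fun v => v.1 = i)).card :=
    Finset.card_eq_sum_card_fiberwise (fun x _ => Finset.mem_univ _)
  have hTle : T.card ≤ n * (q - t) := by
    rw [hTcard]
    calc ∑ i : Fin n, (T.filter (fun v => v.1 = i)).card ≤ ∑ _i : Fin n, (q - t) :=
        Finset.sum_le_sum fun i _ => part1 i
    _ = n * (q - t) := by simp [Finset.sum_const, mul_comm]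
  have htq : t ≤ q := ht ▸ Nat.mod_le q d
  have hsplit : n * (q - t) + n * t = n * q := by
    rw [← Nat.mul_add]
    congr 1
    omega
  refine ⟨part1, ?_, ?_⟩
  · exact Nat.le_sub_of_add_le (by
      calc n * t + T.card ≤ n * t + n * (q - t) := Nat.add_le_add_left hTle _
      _ = n * q := by omega)
  · have hMr : T.card = M.card * r := by
      calc T.card = ∑ E ∈ M, (id E).card :=
          Finset.card_biUnion (fun E hE F hF hEF => hMd E hE F hF hEF)
      _ = ∑ E ∈ M, r :=
          Finset.sum_congr rfl fun E hE => edge_card a hsum (hMe E hE)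
      _ = M.card * r := by simp [Finset.sum_const, mul_comm]
    omega
end

section
/- Let $n \ge (r+1)^2$ and $q \ge r\Delta$, and let $H = H(n, r, q \mid \sigma)$ where $\sigma = (\Delta,\Delta,\dots,\Delta)$ consists of $s = r/\Delta$ equal parts $\Delta$. Then $\nu(H) = \left\lfloor \frac{n\,(q - (q \bmod \Delta))}{r} \right\rfloor$. -/
/-!
Write `t = ⌊q/Δ⌋`. Upper bound: the edges of a matching meeting a fixed class are disjoint and take
`Δ` of its `q` vertices each, so at most `t` of them meet it; double counting incidences between
edges and classes gives `ν · s ≤ n t`. Lower bound: cut each class into `t` blocks of `Δ` vertices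
and list all `n t` blocks level by level; `s ≤ n` consecutive blocks of this list lie in distinct
classes, so cutting the list into runs of `s` blocks gives `⌊n t / s⌋` disjoint edges.
-/

open Finset

section
variable {n q s Δ : ℕ}

theorem isEdge_const_iff (hΔ : Δ ≠ 0) (K : Finset (Fin n × Fin q)) :
    isEdge (fun _ : Fin s => Δ) K ↔
      ∃ S : Finset (Fin n), #S = s ∧ ∀ i, #{v ∈ K | v.1 = i} = if i ∈ S then Δ else 0 := by
  set f : Fin n → ℕ := fun i => #{v ∈ K | v.1 = i}
  have hsupp : Multiset.filter (· ≠ 0) (Multiset.map f univ.val) =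
      Multiset.map f (univ.filter (f · ≠ 0)).val := by
    rw [Multiset.filter_map, filter_val]
    rfl
  unfold isEdge
  rw [hsupp, Multiset.map_const', card_val, card_univ, Fintype.card_fin, Multiset.eq_replicate,
    Multiset.card_map, card_val]
  constructor
  · rintro ⟨hcard, hval⟩
    refine ⟨univ.filter (f · ≠ 0), hcard, fun i => ?_⟩
    split_ifs with hi
    · exact hval _ (Multiset.mem_map_of_mem f hi)
    · exact not_not.1 fun h => hi (mem_filter.2 ⟨mem_univ i, h⟩)
  · rintro ⟨S, hcard, hval⟩
    have hS : univ.filter (f · ≠ 0) = S := by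
      ext i
      simp only [mem_filter, mem_univ, true_and, f, hval]
      split_ifs with hi <;> simp [hi, hΔ]
    refine ⟨hS ▸ hcard, ?_⟩
    rw [hS]
    intro b hb
    obtain ⟨i, hi, rfl⟩ := Multiset.mem_map.1 hb
    exact (hval i).trans (if_pos hi)

theorem isEdge.nonempty (hs : 0 < s) (hΔ : 0 < Δ) {K : Finset (Fin n × Fin q)}
    (hK : isEdge (fun _ : Fin s => Δ) K) : K.Nonempty := by
  obtain ⟨S, hcard, hval⟩ := (isEdge_const_iff hΔ.ne' K).1 hK
  obtain ⟨i, hi⟩ := card_pos.1 (hcard ▸ hs : 0 < #S)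
  have : 0 < #{v ∈ K | v.1 = i} := by rw [hval, if_pos hi]; exact hΔ
  exact (card_pos.1 this).mono (filter_subset _ _)

theorem card_filter_meets_mul_le {M : Finset (Finset (Fin n × Fin q))} (hΔ : Δ ≠ 0)
    (hM : isMatching (fun _ : Fin s => Δ) M) (i : Fin n) :
    #{E ∈ M | #{v ∈ E | v.1 = i} ≠ 0} * Δ ≤ q := by
  classical
  set P := {E ∈ M | #{v ∈ E | v.1 = i} ≠ 0}
  have hclass : ∀ E ∈ P, #{v ∈ E | v.1 = i} = Δ := by
    intro E hE
    obtain ⟨hEM, hEi⟩ := mem_filter.1 hE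
    obtain ⟨S, -, hval⟩ := (isEdge_const_iff hΔ E).1 (hM.1 E hEM)
    rw [hval] at hEi ⊢
    split_ifs at hEi ⊢ <;> simp_all
  have hdisj : (P : Set (Finset (Fin n × Fin q))).PairwiseDisjoint (fun E => {v ∈ E | v.1 = i}) :=
    fun E hE F hF hEF =>
      disjoint_filter_filter (hM.2 E (mem_filter.1 hE).1 F (mem_filter.1 hF).1 hEF)
  calc #P * Δ = ∑ E ∈ P, #{v ∈ E | v.1 = i} := by rw [sum_congr rfl hclass, sum_const, smul_eq_mul]
    _ = #(P.biUnion fun E => {v ∈ E | v.1 = i}) := (card_biUnion hdisj).symm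
    _ ≤ #(univ : Finset (Fin q)) := by
        refine card_le_card_of_injOn Prod.snd (fun _ _ => mem_coe.2 (mem_univ _)) ?_
        intro v hv w hw hvw
        simp only [coe_biUnion, Set.mem_iUnion, mem_coe, mem_filter] at hv hw
        obtain ⟨-, -, -, hv⟩ := hv
        obtain ⟨-, -, -, hw⟩ := hw
        exact Prod.ext (hv.trans hw.symm) hvw
    _ = q := by rw [card_univ, Fintype.card_fin]

theorem card_mul_le_of_isMatching {M : Finset (Finset (Fin n × Fin q))} (hΔ : 0 < Δ)
    (hM : isMatching (fun _ : Fin s => Δ) M) : #M * s ≤ n * (q / Δ) := by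
  have h := card_mul_le_card_mul (s := M) (t := univ) (m := s) (n := q / Δ)
    (fun E i => #{v ∈ E | v.1 = i} ≠ 0) ?_
    (fun i _ => (Nat.le_div_iff_mul_le hΔ).2 (card_filter_meets_mul_le hΔ.ne' hM i))
  · rwa [card_univ, Fintype.card_fin] at h
  intro E hE
  obtain ⟨S, hcard, hval⟩ := (isEdge_const_iff hΔ.ne' E).1 (hM.1 E hE)
  refine (congrArg card (?_ : univ.bipartiteAbove _ E = S)).ge.trans' hcard.ge
  ext i
  simp only [bipartiteAbove, mem_filter, mem_univ, true_and, hval]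
  split_ifs with hi <;> simp [hi, hΔ.ne']

theorem eq_of_mul_add_div_eq (hs : 0 < s) (hsn : s ≤ n) {j j' c : ℕ}
    (h : (n * j + c) / s = (n * j' + c) / s) : j = j' := by
  have key : ∀ {a b : ℕ}, a < b → (n * a + c) / s < (n * b + c) / s := fun {a b} hab =>
    calc (n * a + c) / s < (n * a + c + s) / s := by rw [Nat.add_div_right _ hs]; omega
      _ ≤ (n * b + c) / s := Nat.div_le_div_right (by nlinarith)
  rcases lt_trichotomy j j' with hjj' | rfl | hjj'
  · exact absurd h (key hjj').ne
  · rfl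
  · exact absurd h (key hjj').ne'

theorem lt_of_mul_add_div_eq {n s t j c e : ℕ} (hs : 0 < s) (h : (n * j + c) / s = e)
    (he : (e + 1) * s ≤ n * t) : j < t := by
  have : n * j + c < (e + 1) * s := by
    rw [add_mul, one_mul, ← h]
    exact Nat.lt_div_mul_add hs
  exact Nat.lt_of_mul_lt_mul_left (a := n) (by linarith)

variable (Δ) in
def blockIndex (v : Fin n × Fin q) : ℕ := n * (v.2 / Δ) + v.1

variable (n q s Δ) in
def stripEdge (e : ℕ) : Finset (Fin n × Fin q) := {v | blockIndex Δ v / s = e}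

open Classical in
variable (n s) in
noncomputable def stripClasses (e : ℕ) : Finset (Fin n) := {c | ∃ j, (n * j + c) / s = e}

theorem mem_stripEdge {e : ℕ} {v : Fin n × Fin q} :
    v ∈ stripEdge n q s Δ e ↔ blockIndex Δ v / s = e := by
  simp [stripEdge]

theorem mem_stripClasses {e : ℕ} {c : Fin n} :
    c ∈ stripClasses n s e ↔ ∃ j, (n * j + c) / s = e := by
  simp [stripClasses]

theorem card_stripClasses (hs : 0 < s) (hsn : s ≤ n) (e : ℕ) : #(stripClasses n s e) = s := by
  have : NeZero n := ⟨by omega⟩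
  have hIco : ∀ {b}, b ∈ Ico (e * s) (e * s + s) ↔ b / s = e := by
    intro b
    rw [mem_Ico, Nat.div_eq_iff hs]
    omega
  have h := card_nbij (s := Ico (e * s) (e * s + s)) (t := stripClasses n s e)
    (Fin.ofNat n) ?_ ?_ ?_
  · simpa using h.symm
  · intro b hb
    rw [mem_coe, mem_stripClasses, Fin.val_ofNat]
    exact ⟨b / n, by rw [Nat.div_add_mod]; exact hIco.1 hb⟩
  · intro b hb b' hb' hbb'
    have hmod : b % n = b' % n := by simpa only [Fin.ext_iff, Fin.val_ofNat] using hbb'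
    have hdiv : b / n = b' / n := by
      refine eq_of_mul_add_div_eq hs hsn (c := b % n) ?_
      rw [Nat.div_add_mod, hmod, Nat.div_add_mod, hIco.1 hb, hIco.1 hb']
    rw [← Nat.div_add_mod b n, ← Nat.div_add_mod b' n, hdiv, hmod]
  · intro c hc
    obtain ⟨j, hj⟩ := mem_stripClasses.1 hc
    refine ⟨n * j + c, hIco.2 hj, Fin.ext ?_⟩
    rw [Fin.val_ofNat, Nat.mul_add_mod, Nat.mod_eq_of_lt c.2]

theorem card_filter_stripEdge (hs : 0 < s) (hsn : s ≤ n) (hΔ : 0 < Δ) {e : ℕ}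
    (he : (e + 1) * s ≤ n * (q / Δ)) (c : Fin n) :
    #{v ∈ stripEdge n q s Δ e | v.1 = c} = if c ∈ stripClasses n s e then Δ else 0 := by
  split_ifs with hc <;> rw [mem_stripClasses] at hc
  · obtain ⟨j, hj⟩ := hc
    have hjq : (j + 1) * Δ ≤ q := (Nat.le_div_iff_mul_le hΔ).1 (lt_of_mul_add_div_eq hs hj he)
    have h := card_nbij (s := {v ∈ stripEdge n q s Δ e | v.1 = c}) (t := Ico (j * Δ) (j * Δ + Δ))
      (fun v => v.2.val) ?_ ?_ ?_
    · simpa using h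
    · rintro v hv
      obtain ⟨hvE, rfl⟩ := mem_filter.1 hv
      rw [mem_stripEdge] at hvE
      have : (v.2 : ℕ) / Δ = j := eq_of_mul_add_div_eq hs hsn (hvE.trans hj.symm)
      simp only [coe_Ico, Set.mem_Ico]
      rw [Nat.div_eq_iff hΔ] at this
      omega
    · rintro v hv w hw hvw
      rw [mem_coe, mem_filter] at hv hw
      exact Prod.ext (hv.2.trans hw.2.symm) (Fin.ext hvw)
    · rintro b hb
      simp only [coe_Ico, Set.mem_Ico] at hb
      have hbj : b / Δ = j := (Nat.div_eq_iff hΔ).2 (by omega)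
      refine ⟨(c, ⟨b, by rw [add_mul, one_mul] at hjq; omega⟩), ?_, rfl⟩
      rw [mem_coe, mem_filter, mem_stripEdge, blockIndex]
      exact ⟨by simp only [hbj, hj], rfl⟩
  · refine card_eq_zero.2 (filter_eq_empty_iff.2 fun v hv hvc => hc ⟨v.2 / Δ, ?_⟩)
    rwa [mem_stripEdge, blockIndex, hvc] at hv

theorem isEdge_stripEdge (hs : 0 < s) (hsn : s ≤ n) (hΔ : 0 < Δ) {e : ℕ}
    (he : (e + 1) * s ≤ n * (q / Δ)) : isEdge (fun _ : Fin s => Δ) (stripEdge n q s Δ e) :=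
  (isEdge_const_iff hΔ.ne' _).2
    ⟨stripClasses n s e, card_stripClasses hs hsn e, card_filter_stripEdge hs hsn hΔ he⟩

theorem exists_isMatching_card_eq (hs : 0 < s) (hsn : s ≤ n) (hΔ : 0 < Δ) :
    ∃ M : Finset (Finset (Fin n × Fin q)),
      isMatching (fun _ : Fin s => Δ) M ∧ #M = n * (q / Δ) / s := by
  set m := n * (q / Δ) / s
  have hedge : ∀ e ∈ range m, isEdge (fun _ : Fin s => Δ) (stripEdge n q s Δ e) := by
    intro e he
    refine isEdge_stripEdge hs hsn hΔ ((Nat.mul_le_mul_right s (mem_range.1 he)).trans ?_)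
    exact Nat.div_mul_le_self _ _
  have hinj : Set.InjOn (stripEdge n q s Δ) (range m) := by
    intro e he e' _ hee'
    obtain ⟨v, hv⟩ := (hedge e he).nonempty hs hΔ
    have hv' := hee' ▸ hv
    rw [mem_stripEdge] at hv hv'
    exact hv.symm.trans hv'
  refine ⟨(range m).image (stripEdge n q s Δ), ⟨?_, ?_⟩,
    by rw [card_image_of_injOn hinj, card_range]⟩
  · simp only [mem_image]
    rintro _ ⟨e, he, rfl⟩
    exact hedge e he
  · simp only [mem_image]
    rintro _ ⟨e, -, rfl⟩ _ ⟨e', -, rfl⟩ hne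
    exact disjoint_filter.2 fun v _ hv hv' => hne (by rw [← hv, ← hv'])

end

theorem stmt_9_general (n r q s Δ : ℕ)
    (hΔ : 1 ≤ Δ) (hsΔ : s * Δ = r) (hs : 1 ≤ s)
    (hn : (r + 1) ^ 2 ≤ n) :
    IsGreatest
      {m | ∃ M : Finset (Finset (Fin n × Fin q)),
        isMatching (fun _ : Fin s => Δ) M ∧ M.card = m}
      (n * (q - q % Δ) / r) := by
  have hsn : s ≤ n := by nlinarith
  have hval : n * (q - q % Δ) / r = n * (q / Δ) / s := by
    rw [← Nat.mul_div_self_eq_mod_sub_self, ← hsΔ, mul_left_comm, mul_comm s,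
      Nat.mul_div_mul_left _ _ hΔ]
  rw [hval]
  refine ⟨exists_isMatching_card_eq hs hsn hΔ, ?_⟩
  rintro _ ⟨M, hM, rfl⟩
  exact (Nat.le_div_iff_mul_le hs).2 (card_mul_le_of_isMatching hΔ hM)

theorem stmt_9 (n r q s Δ : ℕ)
    (hΔ : 1 ≤ Δ) (hsΔ : s * Δ = r) (hs : 1 ≤ s)
    (hn : (r + 1) ^ 2 ≤ n) (hq : r * Δ ≤ q) :
    IsGreatest
      {m | ∃ M : Finset (Finset (Fin n × Fin q)),
        isMatching (fun _ : Fin s => Δ) M ∧ M.card = m}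
      (n * (q - q % Δ) / r) :=
  stmt_9_general n r q s Δ hΔ hsΔ hs hn
end

section
/- Let $\sigma = (a_1,\dots,a_s)$ be a partition of $r$ such that some subset $A \subseteq \{1,\dots,s\}$ satisfies $\gcd\big(\sum_{j\in A} a_j,\; r\big) = 1$ (an $r$-good partition). Set $a = \sum_{j \in A} a_j$, $b = r - a$, $L = \mathrm{lcm}(a,b)$. If $r \mid n$ and $L \mid q$, then the $\sigma$-hypergraph $H = H(n, r, q \mid \sigma)$ has a perfect matching, i.e. $\nu(H) = \frac{nq}{r}$. -/
open Finset Function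

namespace SigmaHypergraph

lemma filter_ne_zero_map_univ {α β : Type*} [Fintype α] [Fintype β] [DecidableEq β]
    {σ : α → ℕ} (hpos : ∀ j, 0 < σ j) {g : α → β} (hg : Injective g) :
    Multiset.filter (fun x => x ≠ 0)
        (Multiset.map (fun c => ∑ j, if g j = c then σ j else 0) (univ : Finset β).val) =
      Multiset.map σ (univ : Finset α).val := by
  let f : β → ℕ := fun c => ∑ j, if g j = c then σ j else 0
  have hfg : ∀ j, f (g j) = σ j := fun j => by classical simp [f, hg.eq_iff]
  have hsupp : univ.filter (fun c => f c ≠ 0) = univ.map ⟨g, hg⟩ := by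
    ext c
    simp [f, sum_eq_zero_iff, (hpos _).ne']
  rw [Multiset.filter_map, ← Finset.filter_val]
  simp only [comp_def]
  rw [hsupp, map_val, Multiset.map_map]
  exact Multiset.map_congr rfl fun j _ => hfg j

lemma card_filter_fst_image {n q s : ℕ} {σ : Fin s → ℕ} {f : (Σ j, Fin (σ j)) → Fin n × Fin q}
    (hf : Injective f) {g : Fin s → Fin n} (hfg : ∀ p, (f p).1 = g p.1) (c : Fin n) :
    ((univ.image f).filter (fun v => v.1 = c)).card = ∑ j, if g j = c then σ j else 0 := by
  rw [filter_image, card_image_of_injective _ hf, card_filter, Fintype.sum_sigma]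
  simp [hfg]

lemma isEdge_image {n q s : ℕ} {σ : Fin s → ℕ} (hpos : ∀ j, 0 < σ j)
    {f : (Σ j, Fin (σ j)) → Fin n × Fin q} (hf : Injective f)
    {g : Fin s → Fin n} (hg : Injective g) (hfg : ∀ p, (f p).1 = g p.1) :
    isEdge σ (univ.image f) := by
  unfold isEdge
  simp_rw [card_filter_fst_image hf hfg]
  exact filter_ne_zero_map_univ hpos hg

theorem exists_perfect_matching_of_bijective {ι : Type*} [Fintype ι] {n q s : ℕ}
    {σ : Fin s → ℕ} (hpos : ∀ j, 0 < σ j)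
    (Φ : ι × (Σ j, Fin (σ j)) → Fin n × Fin q) (hΦ : Bijective Φ)
    (cls : ι → Fin s → Fin n) (hcls : ∀ i, Injective (cls i))
    (hΦcls : ∀ i p, (Φ (i, p)).1 = cls i p.1) :
    ∃ M : Finset (Finset (Fin n × Fin q)),
      isMatching σ M ∧ M.card * ∑ j, σ j = n * q ∧ ∀ v, ∃ E ∈ M, v ∈ E := by
  classical
  let edge : ι → Finset (Fin n × Fin q) := fun i => univ.image fun p => Φ (i, p)
  have hinj : ∀ i, Injective fun p => Φ (i, p) := fun i => hΦ.1.comp (Prod.mk_right_injective i)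
  have hdisj : ∀ E ∈ univ.image edge, ∀ F ∈ univ.image edge, E ≠ F → Disjoint E F := by
    simp only [mem_image, mem_univ, true_and]
    rintro _ ⟨i, rfl⟩ _ ⟨i', rfl⟩ hne
    simp only [edge, disjoint_left, mem_image, mem_univ, true_and]
    rintro _ ⟨p, rfl⟩ ⟨p', hp'⟩
    obtain rfl : i' = i := congrArg Prod.fst (hΦ.1 hp')
    exact hne rfl
  have hcover : ∀ v, ∃ E ∈ univ.image edge, v ∈ E := fun v => by
    obtain ⟨⟨i, p⟩, rfl⟩ := hΦ.2 v
    exact ⟨edge i, mem_image_of_mem _ (mem_univ i), mem_image_of_mem _ (mem_univ p)⟩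
  refine ⟨univ.image edge, ⟨?_, hdisj⟩, ?_, hcover⟩
  · simp only [mem_image, mem_univ, true_and, forall_exists_index, forall_apply_eq_imp_iff]
    exact fun i => isEdge_image hpos (hinj i) (hcls i) (hΦcls i)
  · have hunion : (univ.image edge).biUnion (fun E => E) = univ :=
      eq_univ_of_forall fun v => by simpa using hcover v
    have hcard : ∀ E ∈ univ.image edge, E.card = ∑ j, σ j := by
      simp only [mem_image, mem_univ, true_and]
      rintro _ ⟨i, rfl⟩
      rw [card_image_of_injective _ (hinj i), card_univ, Fintype.card_sigma]
      simp
    rw [← sum_const_nat hcard, ← card_biUnion hdisj, hunion, card_univ, Fintype.card_prod,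
      Fintype.card_fin, Fintype.card_fin]

lemma eq_of_mul_add_eq {m u u' c c' : ℕ} (hc : c < m) (hc' : c' < m)
    (h : m * u + c = m * u' + c') : u = u' ∧ c = c' := by
  have hm : 0 < m := by omega
  have hdiv := congrArg (· / m) h
  have hmod := congrArg (· % m) h
  simp only [Nat.mul_add_div hm, Nat.div_eq_of_lt hc, Nat.div_eq_of_lt hc', Nat.mul_add_mod,
    Nat.mod_eq_of_lt hc, Nat.mod_eq_of_lt hc'] at hdiv hmod
  omega

section Construction

variable {s : ℕ} (σ : Fin s → ℕ)

def partOffset (S : Finset (Fin s)) (j : Fin s) : ℕ := ∑ i ∈ S with i < j, σ i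

variable {σ} {S : Finset (Fin s)} {j j' : Fin s}

lemma partOffset_add_self (hj : j ∈ S) :
    partOffset σ S j + σ j = ∑ i ∈ S with i ≤ j, σ i := by
  have : {i ∈ S | i ≤ j} = insert j {i ∈ S | i < j} := by
    ext i
    simp only [mem_filter, mem_insert, le_iff_lt_or_eq]
    aesop
  rw [this, sum_insert (by simp), add_comm, partOffset]

lemma partOffset_add_le_of_lt (hj : j ∈ S) (h : j < j') :
    partOffset σ S j + σ j ≤ partOffset σ S j' := by
  rw [partOffset_add_self hj, partOffset]
  refine sum_le_sum_of_subset fun i => ?_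
  simp only [mem_filter]
  exact fun ⟨hi, hij⟩ => ⟨hi, hij.trans_lt h⟩

lemma partOffset_add_le_sum (hj : j ∈ S) : partOffset σ S j + σ j ≤ ∑ i ∈ S, σ i := by
  rw [partOffset_add_self hj]
  exact sum_le_sum_of_subset (filter_subset _ S)

lemma eq_of_partOffset_add_eq {x x' : ℕ} (hj : j ∈ S) (hj' : j' ∈ S) (hx : x < σ j)
    (hx' : x' < σ j') (h : partOffset σ S j + x = partOffset σ S j' + x') : j = j' ∧ x = x' := by
  obtain hlt | rfl | hlt := lt_trichotomy j j'
  · have := partOffset_add_le_of_lt (σ := σ) hj hlt; omega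
  · omega
  · have := partOffset_add_le_of_lt (σ := σ) hj' hlt; omega


variable (σ) in
/-- Within one side `S`, the `x`-th vertex of part `j` in the `t`-th edge is
`(sideClass σ S t j, sidePos σ S t j x)`. -/
def sideClass (S : Finset (Fin s)) (t : ℕ) (j : Fin s) : ℕ :=
  (partOffset σ S j + t) % ∑ i ∈ S, σ i

variable (σ) in
def sidePos (S : Finset (Fin s)) (t : ℕ) (j : Fin s) (x : ℕ) : ℕ :=
  (∑ i ∈ S, σ i) * (t / ∑ i ∈ S, σ i) + (partOffset σ S j + x)

variable {t t' x x' q : ℕ}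

lemma sideClass_lt (hm : 0 < ∑ i ∈ S, σ i) : sideClass σ S t j < ∑ i ∈ S, σ i :=
  Nat.mod_lt _ hm

lemma sidePos_lt (hj : j ∈ S) (hx : x < σ j) (hmq : (∑ i ∈ S, σ i) ∣ q) (ht : t < q) :
    sidePos σ S t j x < q := by
  set m := ∑ i ∈ S, σ i
  have hoff := partOffset_add_le_sum (σ := σ) hj
  calc sidePos σ S t j x = m * (t / m) + (partOffset σ S j + x) := rfl
    _ < m * (t / m) + m := by omega
    _ = m * (t / m + 1) := by ring
    _ ≤ m * (q / m) := Nat.mul_le_mul_left m (Nat.div_lt_div_of_lt_of_dvd hmq ht)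
    _ = q := Nat.mul_div_cancel' hmq

lemma sideClass_injective (hpos : ∀ i, 0 < σ i) (hj : j ∈ S) (hj' : j' ∈ S)
    (h : sideClass σ S t j = sideClass σ S t j') : j = j' := by
  have hoff := partOffset_add_le_sum (σ := σ) hj
  have hoff' := partOffset_add_le_sum (σ := σ) hj'
  have := hpos j
  have := hpos j'
  have hmod : partOffset σ S j ≡ partOffset σ S j' [MOD ∑ i ∈ S, σ i] :=
    Nat.ModEq.add_right_cancel' t h
  have heq := hmod.eq_of_lt_of_lt (by omega) (by omega)
  exact (eq_of_partOffset_add_eq hj hj' (hpos j) (hpos j') (by rw [heq])).1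

lemma side_injective (hj : j ∈ S) (hj' : j' ∈ S) (hx : x < σ j) (hx' : x' < σ j')
    (hc : sideClass σ S t j = sideClass σ S t' j')
    (hp : sidePos σ S t j x = sidePos σ S t' j' x') : t = t' ∧ j = j' ∧ x = x' := by
  set m := ∑ i ∈ S, σ i
  have hoff := partOffset_add_le_sum (σ := σ) hj
  have hoff' := partOffset_add_le_sum (σ := σ) hj'
  obtain ⟨hdiv, hin⟩ := eq_of_mul_add_eq (by omega) (by omega) hp
  obtain ⟨rfl, rfl⟩ := eq_of_partOffset_add_eq hj hj' hx hx' hin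
  have hmod : t ≡ t' [MOD m] := Nat.ModEq.add_left_cancel' _ hc
  refine ⟨?_, rfl, rfl⟩
  rw [← Nat.div_add_mod t m, ← Nat.div_add_mod t' m, hdiv, hmod]

variable {A : Finset (Fin s)}

variable (σ) in
def blockClass (A : Finset (Fin s)) (t : ℕ) (j : Fin s) : ℕ :=
  if j ∈ A then sideClass σ A t j else (∑ i ∈ A, σ i) + sideClass σ Aᶜ t j

variable (σ) in
def blockPos (A : Finset (Fin s)) (t : ℕ) (j : Fin s) (x : ℕ) : ℕ :=
  if j ∈ A then sidePos σ A t j x else sidePos σ Aᶜ t j x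

lemma blockClass_lt (ha : 0 < ∑ i ∈ A, σ i) (hb : 0 < ∑ i ∈ Aᶜ, σ i) :
    blockClass σ A t j < ∑ i, σ i := by
  have hsum := sum_add_sum_compl A σ
  have := sideClass_lt (σ := σ) (t := t) (j := j) ha
  have := sideClass_lt (σ := σ) (t := t) (j := j) hb
  unfold blockClass
  split_ifs <;> omega

lemma mem_iff_blockClass_lt (ha : 0 < ∑ i ∈ A, σ i) :
    j ∈ A ↔ blockClass σ A t j < ∑ i ∈ A, σ i := by
  have := sideClass_lt (σ := σ) (t := t) (j := j) ha
  unfold blockClass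
  split_ifs with hj <;> simp only [hj, true_iff, false_iff] <;> omega

lemma blockPos_lt (hx : x < σ j) (ha : (∑ i ∈ A, σ i) ∣ q) (hb : (∑ i ∈ Aᶜ, σ i) ∣ q)
    (ht : t < q) : blockPos σ A t j x < q := by
  unfold blockPos
  split_ifs with hj
  · exact sidePos_lt hj hx ha ht
  · exact sidePos_lt (mem_compl.2 hj) hx hb ht

lemma blockClass_injective (hpos : ∀ i, 0 < σ i) (ha : 0 < ∑ i ∈ A, σ i)
    (h : blockClass σ A t j = blockClass σ A t j') : j = j' := by
  have hA : j ∈ A ↔ j' ∈ A := by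
    rw [mem_iff_blockClass_lt ha, mem_iff_blockClass_lt ha, h]
  unfold blockClass at h
  by_cases hj : j ∈ A
  · rw [if_pos hj, if_pos (hA.1 hj)] at h
    exact sideClass_injective hpos hj (hA.1 hj) h
  · rw [if_neg hj, if_neg (hA.not.1 hj), Nat.add_left_cancel_iff] at h
    exact sideClass_injective hpos (mem_compl.2 hj) (mem_compl.2 (hA.not.1 hj)) h

lemma block_injective (ha : 0 < ∑ i ∈ A, σ i) (hx : x < σ j) (hx' : x' < σ j')
    (hc : blockClass σ A t j = blockClass σ A t' j')
    (hp : blockPos σ A t j x = blockPos σ A t' j' x') : t = t' ∧ j = j' ∧ x = x' := by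
  have hA : j ∈ A ↔ j' ∈ A := by
    rw [mem_iff_blockClass_lt ha, mem_iff_blockClass_lt ha, hc]
  unfold blockClass at hc
  unfold blockPos at hp
  by_cases hj : j ∈ A
  · rw [if_pos hj, if_pos (hA.1 hj)] at hc hp
    exact side_injective hj (hA.1 hj) hx hx' hc hp
  · rw [if_neg hj, if_neg (hA.not.1 hj)] at hc hp
    rw [Nat.add_left_cancel_iff] at hc
    exact side_injective (mem_compl.2 hj) (mem_compl.2 (hA.not.1 hj)) hx hx' hc hp

theorem exists_bijective_of_dvd (hpos : ∀ i, 0 < σ i) {n : ℕ} (A : Finset (Fin s))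
    (hrn : (∑ i, σ i) ∣ n) (ha : (∑ i ∈ A, σ i) ∣ q) (hb : (∑ i ∈ Aᶜ, σ i) ∣ q) :
    ∃ (Φ : (Fin (n / ∑ i, σ i) × Fin q) × (Σ j, Fin (σ j)) → Fin n × Fin q)
      (cls : Fin (n / ∑ i, σ i) × Fin q → Fin s → Fin n),
      Bijective Φ ∧ (∀ i, Injective (cls i)) ∧ ∀ i p, (Φ (i, p)).1 = cls i p.1 := by
  set r := ∑ i, σ i
  have hA : ∀ t : Fin q, 0 < ∑ i ∈ A, σ i := fun t => Nat.pos_of_dvd_of_pos ha t.pos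
  have hclass : ∀ (t : Fin q) j, blockClass σ A t j < r := fun t j =>
    blockClass_lt (hA t) (Nat.pos_of_dvd_of_pos hb t.pos)
  have hbound : ∀ (k : Fin (n / r)) (t : Fin q) j, r * k + blockClass σ A t j < n := by
    intro k t j
    calc r * k + blockClass σ A t j < r * (k + 1) := by rw [mul_add, mul_one]; linarith [hclass t j]
      _ ≤ r * (n / r) := Nat.mul_le_mul_left r k.2
      _ = n := Nat.mul_div_cancel' hrn
  let cls : Fin (n / r) × Fin q → Fin s → Fin n := fun i j =>
    ⟨r * i.1 + blockClass σ A i.2 j, hbound i.1 i.2 j⟩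
  let Φ : (Fin (n / r) × Fin q) × (Σ j, Fin (σ j)) → Fin n × Fin q := fun ip =>
    (cls ip.1 ip.2.1, ⟨blockPos σ A ip.1.2 ip.2.1 ip.2.2, blockPos_lt ip.2.2.2 ha hb ip.1.2.2⟩)
  refine ⟨Φ, cls, ?_, fun i j j' h => ?_, fun _ _ => rfl⟩
  · rw [Fintype.bijective_iff_injective_and_card]
    refine ⟨?_, ?_⟩
    · rintro ⟨⟨k, t⟩, ⟨j, x⟩⟩ ⟨⟨k', t'⟩, ⟨j', x'⟩⟩ h
      simp only [Φ, cls, Prod.mk.injEq, Fin.mk.injEq] at h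
      obtain ⟨hk, hc⟩ := eq_of_mul_add_eq (hclass t j) (hclass t' j') h.1
      obtain ⟨ht, rfl, hx⟩ := block_injective (hA t) x.2 x'.2 hc h.2
      rw [Fin.ext hk, Fin.ext ht, Fin.ext hx]
    · simp only [Fintype.card_prod, Fintype.card_fin, Fintype.card_sigma, r]
      rw [mul_right_comm, Nat.div_mul_cancel hrn]
  · simp only [cls, Fin.mk.injEq, Nat.add_left_cancel_iff] at h
    exact blockClass_injective hpos (hA i.2) h

end Construction

end SigmaHypergraph

theorem stmt_11_general (n r q s a b L : ℕ) (σ : Fin s → ℕ) (A : Finset (Fin s))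
    (hpos : ∀ i, 1 ≤ σ i)
    (hsum : ∑ i, σ i = r)
    (ha : a = ∑ j ∈ A, σ j)
    (hb : b = r - a)
    (hL : L = Nat.lcm a b)
    (hrn : r ∣ n) (hLq : L ∣ q) :
    ∃ M : Finset (Finset (Fin n × Fin q)),
      isMatching σ M ∧
      M.card * r = n * q ∧
      ∀ v : Fin n × Fin q, ∃ E ∈ M, v ∈ E := by
  have hb' : b = ∑ j ∈ Aᶜ, σ j := by
    have := Finset.sum_add_sum_compl A σ
    omega
  subst hsum ha hb' hL
  obtain ⟨Φ, cls, hΦ, hcls, hΦcls⟩ := SigmaHypergraph.exists_bijective_of_dvd hpos A hrn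
    ((Nat.dvd_lcm_left _ _).trans hLq) ((Nat.dvd_lcm_right _ _).trans hLq)
  exact SigmaHypergraph.exists_perfect_matching_of_bijective hpos Φ hΦ cls hcls hΦcls

theorem stmt_11 (n r q s a b L : ℕ) (σ : Fin s → ℕ) (A : Finset (Fin s))
    (hs : 1 ≤ s)
    (hpos : ∀ i, 1 ≤ σ i)
    (hmono : ∀ i j : Fin s, i ≤ j → σ j ≤ σ i)
    (hsum : ∑ i, σ i = r)
    (ha : a = ∑ j ∈ A, σ j)
    (hgood : Nat.gcd a r = 1)
    (hb : b = r - a)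
    (hL : L = Nat.lcm a b)
    (hrn : r ∣ n) (hLq : L ∣ q) :
    ∃ M : Finset (Finset (Fin n × Fin q)),
      isMatching σ M ∧
      M.card * r = n * q ∧
      ∀ v : Fin n × Fin q, ∃ E ∈ M, v ∈ E :=
  stmt_11_general n r q s a b L σ A hpos hsum ha hb hL hrn hLq
end

section
/- Let $\sigma=(a_1,\dots,a_s)$ be an $r$-good partition of $r$ with associated $a, b$ (with $a+b=r$, $\gcd(a,r)=\gcd(b,r)=1$) and $L=\mathrm{lcm}(a,b)$. If $r \mid n$ and $q \ge (L-1)(r-1)$, then $H = H(n,r,q \mid \sigma)$ has a perfect matching, i.e. $\nu(H) = \frac{nq}{r}$. -/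
/-!
Call `d : P → ℕ` an `m`-profile when its nonzero values form the multiset `m`: the column counts
of a σ-edge are exactly the profiles of `σ`. If the constant function `q` on the `n` columns is a
sum of profiles, stacking them column by column cuts `[n] × [q]` into edges, i.e. gives a perfect
matching. The heights `q` for which this works form an additive submonoid of `ℕ`. On `r` columns
it contains `r` (all cyclic shifts of `σ` padded to `ℤ/r`) and `a * b = lcm a b` (split the
columns as `a + b` and use the pairs of cyclic shifts of the parts of `σ` indexed by `A` on `ℤ/a`
and by `Aᶜ` on `ℤ/b`), and placing blocks of `r` columns side by side passes to any `n` with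
`r ∣ n`. Since `gcd(a * b, r) = 1`, the Chicken McNugget theorem puts every
`q ≥ (a * b - 1)(r - 1)` in the submonoid.
-/

open Finset

section Profile

variable {P Q : Type*} [Fintype P] [Fintype Q] {m m₁ m₂ : Multiset ℕ}

def IsProfile (m : Multiset ℕ) (d : P → ℕ) : Prop :=
  (univ.val.map d).filter (· ≠ 0) = m

lemma isProfile_iff {d : P → ℕ} :
    IsProfile m d ↔ (univ.filter fun p => d p ≠ 0).val.map d = m := by
  simp [IsProfile, Multiset.filter_map, filter_val]

lemma IsProfile.sum_eq {d : P → ℕ} (h : IsProfile m d) : ∑ p, d p = m.sum := by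
  rw [← isProfile_iff.1 h, ← sum_filter_ne_zero]
  rfl

lemma IsProfile.of_comp_embedding {d : Q → ℕ} (e : P ↪ Q) (h : IsProfile m (d ∘ e))
    (hzero : ∀ y ∉ Set.range e, d y = 0) : IsProfile m d := by
  rw [isProfile_iff] at h ⊢
  rw [← h]
  have : univ.filter (fun y => d y ≠ 0) = (univ.filter fun p => (d ∘ e) p ≠ 0).map e := by
    ext y
    simp only [mem_filter, mem_univ, true_and, mem_map, Function.comp_apply]
    constructor
    · intro hy
      obtain ⟨p, rfl⟩ : y ∈ Set.range e := by
        by_contra hy'; exact hy (hzero y hy')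
      exact ⟨p, hy, rfl⟩
    · rintro ⟨p, hp, rfl⟩; exact hp
  rw [this, map_val, Multiset.map_map]

lemma IsProfile.comp_equiv {d : P → ℕ} (h : IsProfile m d) (e : Q ≃ P) : IsProfile m (d ∘ e) :=
  .of_comp_embedding e.symm.toEmbedding (by simpa [Function.comp_def] using h)
    fun y hy => (hy (e.symm.surjective y)).elim

lemma IsProfile.sum_elim {d₁ : P → ℕ} {d₂ : Q → ℕ} (h₁ : IsProfile m₁ d₁) (h₂ : IsProfile m₂ d₂) :
    IsProfile (m₁ + m₂) (Sum.elim d₁ d₂) := by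
  rw [IsProfile, ← h₁, ← h₂, ← Multiset.filter_add, ← univ_disjSum_univ, val_disjSum,
    Multiset.disjSum, Multiset.map_add, Multiset.map_map, Multiset.map_map]
  rfl

lemma exists_isProfile (h0 : 0 ∉ m) (hcard : Multiset.card m ≤ Fintype.card P) :
    ∃ d : P → ℕ, IsProfile m d := by
  induction m using Quotient.inductionOn with | h l => ?_
  obtain ⟨e⟩ := Function.Embedding.nonempty_of_card_le (α := Fin l.length) (β := P)
    (by simpa using hcard)
  refine ⟨Function.extend e l.get 0, .of_comp_embedding e ?_ fun y hy => ?_⟩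
  · rw [Function.extend_comp e.injective]
    unfold IsProfile
    rw [Multiset.filter_eq_self.2, Fin.univ_val_map, List.ofFn_get]
    · rfl
    · intro x hx h
      simp only [Fin.univ_val_map, List.ofFn_get] at hx
      exact h0 (h ▸ hx)
  · exact Function.extend_apply' _ _ _ (by simpa using hy)

end Profile

section Tileable

variable {P Q : Type*} [Fintype P] [Fintype Q] {m m₁ m₂ : Multiset ℕ} {q : ℕ}

def tileable (m : Multiset ℕ) (P : Type*) [Fintype P] : AddSubmonoid ℕ where
  carrier := {q | ∃ (N : ℕ) (d : Fin N → P → ℕ), (∀ e, IsProfile m (d e)) ∧ ∀ p, ∑ e, d e p = q}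
  zero_mem' := ⟨0, Fin.elim0, fun e => e.elim0, fun _ => rfl⟩
  add_mem' := by
    rintro q₁ q₂ ⟨N₁, d₁, hd₁, hs₁⟩ ⟨N₂, d₂, hd₂, hs₂⟩
    refine ⟨N₁ + N₂, Fin.append d₁ d₂, Fin.addCases (by simpa using hd₁) (by simpa using hd₂),
      fun p => ?_⟩
    simp [Fin.sum_univ_add, hs₁, hs₂]

lemma mem_tileable : q ∈ tileable m P ↔
    ∃ (N : ℕ) (d : Fin N → P → ℕ), (∀ e, IsProfile m (d e)) ∧ ∀ p, ∑ e, d e p = q :=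
  Iff.rfl

lemma mem_tileable_of_fintype {ι : Type*} [Fintype ι] (d : ι → P → ℕ)
    (hd : ∀ e, IsProfile m (d e)) (hsum : ∀ p, ∑ e, d e p = q) : q ∈ tileable m P := by
  let g := Fintype.equivFin ι
  exact mem_tileable.2 ⟨_, fun e => d (g.symm e), fun e => hd _, fun p => by
    rw [← hsum p, ← g.symm.sum_comp]⟩

lemma mem_tileable_of_equiv (g : P ≃ Q) (hq : q ∈ tileable m P) : q ∈ tileable m Q := by
  obtain ⟨N, d, hd, hsum⟩ := mem_tileable.1 hq
  exact mem_tileable.2 ⟨N, fun e => d e ∘ g.symm, fun e => (hd e).comp_equiv _, fun p => hsum _⟩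

lemma mem_tileable_prod (κ : Type*) [Fintype κ] [DecidableEq κ] (hq : q ∈ tileable m P) :
    q ∈ tileable m (κ × P) := by
  obtain ⟨N, d, hd, hsum⟩ := mem_tileable.1 hq
  refine mem_tileable_of_fintype (fun (ke : κ × Fin N) (x : κ × P) =>
    if x.1 = ke.1 then d ke.2 x.2 else 0) (fun ⟨k, e⟩ => ?_) fun ⟨k, p⟩ => ?_
  · refine .of_comp_embedding (.sectR k P) (by simpa [Function.comp_def] using hd e) ?_
    rintro ⟨k', p⟩ h
    rw [if_neg]
    rintro rfl
    exact h ⟨p, rfl⟩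
  · simp [Fintype.sum_prod_type, hsum]

variable {G H : Type*} [AddCommGroup G] [Fintype G] [AddCommGroup H] [Fintype H]

lemma sum_comp_sub_left (f : G → ℕ) (x : G) : ∑ g, f (x - g) = ∑ g, f g :=
  (Equiv.subLeft x).sum_comp f

lemma sum_mem_tileable {f : G → ℕ} (hf : IsProfile m f) : ∑ g, f g ∈ tileable m G :=
  mem_tileable_of_fintype (fun g x => f (x - g)) (fun g => hf.comp_equiv (Equiv.subRight g))
    fun x => sum_comp_sub_left f x

lemma card_mul_card_mem_tileable_sum {f₁ : G → ℕ} {f₂ : H → ℕ} (h₁ : IsProfile m₁ f₁)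
    (h₂ : IsProfile m₂ f₂) (hs₁ : ∑ g, f₁ g = Fintype.card G) (hs₂ : ∑ h, f₂ h = Fintype.card H) :
    Fintype.card G * Fintype.card H ∈ tileable (m₁ + m₂) (G ⊕ H) := by
  refine mem_tileable_of_fintype (fun (gh : G × H) => Sum.elim (fun x => f₁ (x - gh.1))
    fun y => f₂ (y - gh.2)) (fun gh => (h₁.comp_equiv (Equiv.subRight _)).sum_elim
      (h₂.comp_equiv (Equiv.subRight _))) ?_
  rintro (x | y)
  · simp [Fintype.sum_prod_type, ← mul_sum, sum_comp_sub_left, hs₁, mul_comm]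
  · simp [Fintype.sum_prod_type, sum_comp_sub_left, hs₂]

end Tileable

section Matching

variable {n q s : ℕ} {σ : Fin s → ℕ}

lemma card_eq_of_isEdge {K : Finset (Fin n × Fin q)} (hK : isEdge σ K) : #K = ∑ j, σ j := by
  rw [card_eq_sum_card_fiberwise fun v _ => mem_univ v.1, IsProfile.sum_eq hK]
  rfl

lemma exists_perfect_matching_of_fibres {ι : Type*} [DecidableEq ι] (c : Fin n × Fin q → ι)
    (hc : ∀ v, isEdge σ {w | c w = c v}) :
    ∃ M : Finset (Finset (Fin n × Fin q)), isMatching σ M ∧ #M * ∑ j, σ j = n * q ∧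
      ∀ v, ∃ E ∈ M, v ∈ E := by
  set M := univ.image fun v => ({w | c w = c v} : Finset _)
  have hedge : ∀ E ∈ M, isEdge σ E := by
    simp only [M, mem_image]
    rintro _ ⟨v, -, rfl⟩
    exact hc v
  have hdisj : (M : Set (Finset (Fin n × Fin q))).PairwiseDisjoint id := by
    simp only [M, coe_image, coe_univ, Set.image_univ]
    rintro _ ⟨v, rfl⟩ _ ⟨w, rfl⟩ hne
    refine disjoint_filter.2 fun x _ hv hw => hne ?_
    simp only [← hv, hw]
  have hcover : ∀ v, ∃ E ∈ M, v ∈ E := fun v => ⟨_, mem_image_of_mem _ (mem_univ v), by simp⟩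
  refine ⟨M, ⟨hedge, fun E hE F hF => hdisj hE hF⟩, ?_, hcover⟩
  have hunion : M.biUnion id = univ := eq_univ_of_forall fun v => by
    obtain ⟨E, hE, hv⟩ := hcover v
    exact mem_biUnion.2 ⟨E, hE, hv⟩
  calc #M * ∑ j, σ j = ∑ E ∈ M, #E := by
        rw [sum_congr rfl fun E hE => card_eq_of_isEdge (hedge E hE), sum_const, smul_eq_mul]
    _ = #(M.biUnion id) := (card_biUnion hdisj).symm
    _ = n * q := by simp [hunion]

lemma exists_perfect_matching_of_mem_tileable (hq : q ∈ tileable (univ.val.map σ) (Fin n)) :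
    ∃ M : Finset (Finset (Fin n × Fin q)), isMatching σ M ∧ #M * ∑ j, σ j = n * q ∧
      ∀ v, ∃ E ∈ M, v ∈ E := by
  obtain ⟨N, d, hd, hsum⟩ := mem_tileable.1 hq
  -- column `i` is cut into consecutive intervals of lengths `d e i`, one for each `e`
  let slot (i : Fin n) : Fin q ≃ (e : Fin N) × Fin (d e i) :=
    (finCongr (hsum i).symm).trans finSigmaFinEquiv.symm
  let edge (v : Fin n × Fin q) : Fin N := (slot v.1 v.2).1
  have hcount (e : Fin N) (i : Fin n) :
      #(({w | edge w = e} : Finset (Fin n × Fin q)).filter (·.1 = i)) = d e i :=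
    calc #(({w | edge w = e} : Finset (Fin n × Fin q)).filter (·.1 = i))
        = #({j | (slot i j).1 = e} : Finset (Fin q)) := by
          rw [← card_map (.sectR i (Fin q))]
          congr 1
          ext ⟨i', j⟩
          simp only [mem_filter, mem_univ, true_and, mem_map, Function.Embedding.sectR_apply,
            Prod.mk.injEq]
          constructor
          · rintro ⟨h, rfl⟩
            exact ⟨j, h, rfl, rfl⟩
          · rintro ⟨j, h, rfl, rfl⟩
            exact ⟨h, rfl⟩
      _ = #({x | x.1 = e} : Finset ((e : Fin N) × Fin (d e i))) := card_equiv (slot i) (by simp)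
      _ = d e i := by
          rw [card_filter, Fintype.sum_sigma]
          simp [apply_ite]
  refine exists_perfect_matching_of_fibres edge fun v => ?_
  unfold isEdge
  simp only [hcount]
  exact hd _

end Matching

section Blocks

variable {m m₁ m₂ : Multiset ℕ} {q : ℕ}

lemma card_le_sum_of_zero_notMem (h0 : 0 ∉ m) : Multiset.card m ≤ m.sum := by
  simpa using Multiset.card_nsmul_le_sum (a := 1) fun x hx =>
    Nat.one_le_iff_ne_zero.2 fun h => h0 (h ▸ hx)

lemma exists_isProfile_fin_sum (h0 : 0 ∉ m) : ∃ f : Fin m.sum → ℕ, IsProfile m f :=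
  exists_isProfile h0 ((card_le_sum_of_zero_notMem h0).trans_eq (Fintype.card_fin _).symm)

lemma sum_mem_tileable_fin (h0 : 0 ∉ m) : m.sum ∈ tileable m (Fin m.sum) := by
  obtain hm | hm := Nat.eq_zero_or_pos m.sum
  · rw [hm]
    exact zero_mem _
  have : NeZero m.sum := ⟨hm.ne'⟩
  obtain ⟨f, hf⟩ := exists_isProfile_fin_sum h0
  simpa [hf.sum_eq] using sum_mem_tileable hf

lemma sum_mul_sum_mem_tileable_fin (h₁ : 0 ∉ m₁) (h₂ : 0 ∉ m₂) :
    m₁.sum * m₂.sum ∈ tileable (m₁ + m₂) (Fin (m₁ + m₂).sum) := by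
  obtain hm₁ | hm₁ := Nat.eq_zero_or_pos m₁.sum
  · simp [hm₁, zero_mem]
  obtain hm₂ | hm₂ := Nat.eq_zero_or_pos m₂.sum
  · simp [hm₂, zero_mem]
  have : NeZero m₁.sum := ⟨hm₁.ne'⟩
  have : NeZero m₂.sum := ⟨hm₂.ne'⟩
  obtain ⟨f₁, hf₁⟩ := exists_isProfile_fin_sum h₁
  obtain ⟨f₂, hf₂⟩ := exists_isProfile_fin_sum h₂
  have := card_mul_card_mem_tileable_sum hf₁ hf₂ (by simp [hf₁.sum_eq]) (by simp [hf₂.sum_eq])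
  rw [Fintype.card_fin, Fintype.card_fin] at this
  exact mem_tileable_of_equiv (finSumFinEquiv.trans (finCongr (Multiset.sum_add _ _).symm)) this

lemma zero_notMem_map_of_pos {ι : Type*} {σ : ι → ℕ} (hσ : ∀ i, 0 < σ i) (B : Finset ι) :
    0 ∉ B.val.map σ := by
  simpa [eq_comm] using fun i _ => (hσ i).ne'

lemma sum_mul_sum_compl_mem_tileable {s : ℕ} {σ : Fin s → ℕ} (hσ : ∀ i, 0 < σ i)
    (A : Finset (Fin s)) :
    (∑ j ∈ A, σ j) * ∑ j ∈ Aᶜ, σ j ∈ tileable (univ.val.map σ) (Fin (∑ j, σ j)) := by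
  have hsplit : A.val.map σ + Aᶜ.val.map σ = univ.val.map σ := by
    rw [← Multiset.map_add, ← disjUnion_val _ _ disjoint_compl_right, disjUnion_eq_union,
      union_compl]
  have :=
    sum_mul_sum_mem_tileable_fin (zero_notMem_map_of_pos hσ A) (zero_notMem_map_of_pos hσ Aᶜ)
  rwa [hsplit] at this

lemma mem_tileable_fin_of_dvd {r n : ℕ} (h : r ∣ n) (hq : q ∈ tileable m (Fin r)) :
    q ∈ tileable m (Fin n) := by
  obtain ⟨K, rfl⟩ := h
  exact mem_tileable_of_equiv (finProdFinEquiv.trans (finCongr (mul_comm K r)))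
    (mem_tileable_prod (Fin K) hq)

end Blocks

lemma AddSubmonoid.mem_of_sub_one_mul_sub_one_le {S : AddSubmonoid ℕ} {L r q : ℕ} (hL : L ∈ S)
    (hr : r ∈ S) (hcop : L.Coprime r) (hq : (L - 1) * (r - 1) ≤ q) : q ∈ S := by
  obtain ⟨x, y, rfl⟩ := Nat.exists_add_mul_eq_of_gcd_dvd_of_mul_pred_le L r q
    (by simp [hcop.gcd_eq_one]) hq
  exact add_mem (nsmul_mem hL x) (nsmul_mem hr y)

theorem stmt_12_general (n r q s a b L : ℕ) (σ : Fin s → ℕ) (A : Finset (Fin s))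
    (hpos : ∀ i, 1 ≤ σ i)
    (hsum : ∑ i, σ i = r)
    (ha : a = ∑ j ∈ A, σ j)
    (hgood : Nat.gcd a r = 1)
    (hb : b = r - a)
    (hL : L = Nat.lcm a b)
    (hrn : r ∣ n) (hq : (L - 1) * (r - 1) ≤ q) :
    ∃ M : Finset (Finset (Fin n × Fin q)),
      isMatching σ M ∧
      M.card * r = n * q ∧
      ∀ v : Fin n × Fin q, ∃ E ∈ M, v ∈ E := by
  have hb' : b = ∑ j ∈ Aᶜ, σ j := by
    rw [hb, ha, ← hsum, ← sum_add_sum_compl A σ, Nat.add_sub_cancel_left]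
  have hr : r = a + b := by rw [ha, hb', sum_add_sum_compl, hsum]
  have hab : a.Coprime b := Nat.coprime_self_add_right.1 (hr ▸ hgood)
  have hLab : L = a * b := by rw [hL, hab.lcm_eq_mul]
  have hLr : L.Coprime r := by
    rw [hLab, hr]
    exact .mul_left (Nat.coprime_self_add_right.2 hab) (Nat.coprime_add_self_right.2 hab.symm)
  have hLmem : L ∈ tileable (univ.val.map σ) (Fin r) := by
    rw [hLab, ha, hb', ← hsum]
    exact sum_mul_sum_compl_mem_tileable hpos A
  have hrmem : r ∈ tileable (univ.val.map σ) (Fin r) :=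
    hsum ▸ sum_mem_tileable_fin (zero_notMem_map_of_pos hpos univ)
  have := exists_perfect_matching_of_mem_tileable (mem_tileable_fin_of_dvd hrn
    (AddSubmonoid.mem_of_sub_one_mul_sub_one_le hLmem hrmem hLr hq))
  rwa [hsum] at this

theorem stmt_12 (n r q s a b L : ℕ) (σ : Fin s → ℕ) (A : Finset (Fin s))
    (hs : 1 ≤ s)
    (hpos : ∀ i, 1 ≤ σ i)
    (hmono : ∀ i j : Fin s, i ≤ j → σ j ≤ σ i)
    (hsum : ∑ i, σ i = r)
    (ha : a = ∑ j ∈ A, σ j)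
    (hgood : Nat.gcd a r = 1)
    (hb : b = r - a)
    (hL : L = Nat.lcm a b)
    (hrn : r ∣ n) (hq : (L - 1) * (r - 1) ≤ q) :
    ∃ M : Finset (Finset (Fin n × Fin q)),
      isMatching σ M ∧
      M.card * r = n * q ∧
      ∀ v : Fin n × Fin q, ∃ E ∈ M, v ∈ E :=
  stmt_12_general n r q s a b L σ A hpos hsum ha hgood hb hL hrn hq
end

section
/- For every $\sigma$-hypergraph $H = H(n, r, q \mid \sigma)$ with $n \ge s(\sigma)$ and $q \ge a_1$, the independence number satisfies $\alpha(H) \ge \max_{1 \le j \le s} \big( (j-1)q + (a_j - 1)(n - j + 1) \big)$, where $\sigma = (a_1 \ge a_2 \ge \dots \ge a_s)$. -/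
/-!
For `σ = (a₀ ≥ a₁ ≥ ⋯)` (indexed from `0`, so `j : Fin s` is the paper's `j + 1`), the witness
takes the first `j` classes completely and `a j - 1` vertices from every later class. The nonzero
class sizes of an edge are the parts of `σ` as a multiset, so it has as many classes of size at
least `a j` as `σ` has parts `≥ a j`: at least `j + 1`, as `σ` is non-increasing. Inside the
witness only the `j` full classes are that large.
-/

open Finset

section

variable {n q s : ℕ}

def classSize (E : Finset (Fin n × Fin q)) (i : Fin n) : ℕ := #{v ∈ E | v.1 = i}

theorem pos_of_isEdge {a : Fin s → ℕ} {E : Finset (Fin n × Fin q)} (hE : isEdge a E) (k : Fin s) :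
    0 < a k := by
  have hk : a k ∈ Multiset.map a univ.val := Multiset.mem_map_of_mem _ (mem_univ k)
  rw [← hE] at hk
  exact Nat.pos_of_ne_zero (Multiset.mem_filter.1 hk).2

theorem card_le_classSize_eq_of_isEdge {a : Fin s → ℕ} {E : Finset (Fin n × Fin q)} (hE : isEdge a E)
    {t : ℕ} (ht : 0 < t) : #{i | t ≤ classSize E i} = #{k | t ≤ a k} := by
  have h := congrArg (Multiset.countP (t ≤ ·)) hE
  rw [Multiset.countP_filter, Multiset.countP_map, Multiset.countP_map] at h
  calc #{i | t ≤ classSize E i}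
      = #{i | t ≤ classSize E i ∧ classSize E i ≠ 0} :=
        congrArg card (filter_congr fun _ _ => (and_iff_left_of_imp (ht.trans_le · |>.ne')).symm)
    _ = #{k | t ≤ a k} := h

theorem lt_card_le_apply_of_antitone {a : Fin s → ℕ} (ha : Antitone a) (j : Fin s) :
    (j : ℕ) < #{k | a j ≤ a k} :=
  (Fin.lt_card_filter_univ_iff_apply_of_imp _ fun _ _ hkl h => h.trans (ha hkl)).2 le_rfl

def witness (j m : ℕ) : Finset (Fin n × Fin q) :=
  ({i | i < j} : Finset (Fin n)) ×ˢ (univ : Finset (Fin q)) ∪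
    ({i | j ≤ i} : Finset (Fin n)) ×ˢ ({v | v < m} : Finset (Fin q))

theorem card_witness {j m : ℕ} (hj : j ≤ n) (hm : m ≤ q) :
    #(witness j m : Finset (Fin n × Fin q)) = j * q + m * (n - j) := by
  have hdisj : Disjoint (({i | i < j} : Finset (Fin n)) ×ˢ (univ : Finset (Fin q)))
      (({i | j ≤ i} : Finset (Fin n)) ×ˢ ({v | v < m} : Finset (Fin q))) :=
    disjoint_product.2 (.inl (disjoint_filter.2 fun _ _ => not_le.2))
  have hlow : #{i : Fin n | i < j} = j := by rw [Fin.card_filter_val_lt, min_eq_right hj]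
  have hhigh : #{i : Fin n | j ≤ i} = n - j := by
    simp_rw [← not_lt]
    rw [filter_not, card_sdiff_of_subset (filter_subset _ _), hlow, card_univ, Fintype.card_fin]
  rw [witness, card_union_of_disjoint hdisj, card_product, card_product, hlow, hhigh,
    Fin.card_filter_val_lt, min_eq_right hm, card_univ, Fintype.card_fin, Nat.mul_comm m]

theorem classSize_le_of_subset_witness {j m : ℕ} {E : Finset (Fin n × Fin q)}
    (hE : E ⊆ witness j m) {i : Fin n} (hi : j ≤ i) : classSize E i ≤ m := by
  calc classSize E i ≤ #{v : Fin q | v < m} := by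
        refine card_le_card_of_injOn Prod.snd (fun v hv => ?_) fun v hv w hw hvw => ?_
        · obtain ⟨hvE, rfl⟩ := mem_filter.1 hv
          have hvS := hE hvE
          simp only [witness, mem_union, mem_product, mem_filter, mem_univ, true_and] at hvS
          exact mem_filter.2 ⟨mem_univ _, by omega⟩
        · exact Prod.ext ((mem_filter.1 hv).2.trans (mem_filter.1 hw).2.symm) hvw
    _ ≤ m := Fin.card_filter_val_lt.trans_le (min_le_right _ _)

theorem card_lt_classSize_le_of_subset_witness {j m : ℕ} {E : Finset (Fin n × Fin q)}
    (hE : E ⊆ witness j m) : #{i | m < classSize E i} ≤ j :=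
  calc #{i | m < classSize E i} ≤ #{i : Fin n | i < j} :=
        card_le_card (monotone_filter_right _ fun _ _ hi => not_le.1 fun hji =>
          (classSize_le_of_subset_witness hE hji).not_gt hi)
    _ ≤ j := Fin.card_filter_val_lt.trans_le (min_le_right _ _)

theorem not_subset_witness {a : Fin s → ℕ} (ha : Antitone a) {E : Finset (Fin n × Fin q)}
    (hE : isEdge a E) (j : Fin s) : ¬ E ⊆ witness j (a j - 1) := fun hsub => by
  have hpos := pos_of_isEdge hE j
  have hmany := card_le_classSize_eq_of_isEdge hE hpos ▸ lt_card_le_apply_of_antitone ha j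
  have hfew := card_lt_classSize_le_of_subset_witness hsub
  simp only [Nat.sub_lt_iff_lt_add hpos, Nat.lt_add_one_iff] at hfew
  omega

end

theorem stmt_14_general (n q s : ℕ) (a : Fin s → ℕ)
    (hs : 1 ≤ s)
    (hmono : ∀ i j : Fin s, i ≤ j → a j ≤ a i)
    (hn : s ≤ n) (hq : a ⟨0, hs⟩ ≤ q) :
    ∀ j : Fin s, ∃ S : Finset (Fin n × Fin q),
      (∀ E : Finset (Fin n × Fin q), isEdge a E → ¬ E ⊆ S) ∧
      (j : ℕ) * q + (a j - 1) * (n - (j : ℕ)) ≤ S.card := by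
  intro j
  have haq : a j ≤ q := (hmono _ j (Nat.zero_le _)).trans hq
  refine ⟨witness j (a j - 1), fun E hE => not_subset_witness hmono hE j, ?_⟩
  exact (card_witness (by omega) (by omega)).ge

theorem stmt_14 (n r q s : ℕ) (a : Fin s → ℕ)
    (hs : 1 ≤ s)
    (hpos : ∀ i, 1 ≤ a i)
    (hmono : ∀ i j : Fin s, i ≤ j → a j ≤ a i)
    (hsum : ∑ i, a i = r)
    (hn : s ≤ n) (hq : a ⟨0, hs⟩ ≤ q) :
    ∀ j : Fin s, ∃ S : Finset (Fin n × Fin q),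
      (∀ E : Finset (Fin n × Fin q), isEdge a E → ¬ E ⊆ S) ∧
      (j : ℕ) * q + (a j - 1) * (n - (j : ℕ)) ≤ S.card :=
  stmt_14_general n q s a hs hmono hn hq
end

section
/- Let $H = H(n, r, q \mid \sigma)$ be a $\sigma$-hypergraph with $\sigma = (a_1 \ge \dots \ge a_s)$, $n \ge s$, $q \ge a_1$. Let $B \subseteq V(H)$ with $b_i = |B \cap V_i|$ and assume $b_1 \ge b_2 \ge \dots \ge b_n$. Then $\max_{E \in E(H)} |E \cap B| = \sum_{i=1}^{s} \min\{a_i, b_i\}$; that is, the edge maximizing intersection with $B$ places its part of size $a_i$ in class $V_i$ (sorted matching of the two nonincreasing sequences), and this value is achieved by some edge. -/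
open Finset

lemma sum_min_eq_sum_card_filter {ι : Type*} [Fintype ι] (x y : ι → ℕ) (N : ℕ)
    (hx : ∀ i, x i ≤ N) :
    ∑ i, min (x i) (y i) = ∑ k ∈ range N, #{i | k < x i ∧ k < y i} := by
  have hlayer : ∀ i, min (x i) (y i) = ∑ k ∈ range N, if k < x i ∧ k < y i then 1 else 0 := by
    intro i
    rw [sum_boole, Nat.cast_id, ← card_range (min (x i) (y i))]
    congr 1
    ext k
    simp only [mem_range, mem_filter, lt_min_iff]
    have := hx i
    omega
  simp only [hlayer]
  rw [sum_comm]
  simp only [sum_boole, Nat.cast_id]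

lemma Antitone.lt_apply_iff_lt_card {m : ℕ} {x : Fin m → ℕ} (hx : Antitone x) (k : ℕ)
    (i : Fin m) : k < x i ↔ (i : ℕ) < #{j | k < x j} := by
  constructor
  · intro hi
    have hsub : Iic i ⊆ ({j | k < x j} : Finset (Fin m)) := fun j hj =>
      mem_filter.2 ⟨mem_univ j, hi.trans_le (hx (mem_Iic.1 hj))⟩
    have := card_le_card hsub
    rw [Fin.card_Iic] at this
    omega
  · intro hi
    by_contra! hxi
    have hsub : ({j | k < x j} : Finset (Fin m)) ⊆ Iio i := fun j hj =>
      mem_Iio.2 (lt_of_not_ge fun hij => ((mem_filter.1 hj).2.trans_le (hx hij)).not_ge hxi)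
    have := card_le_card hsub
    rw [Fin.card_Iio] at this
    omega

lemma card_filter_lt_and_lt_castLE {s n : ℕ} (hn : s ≤ n) {a : Fin s → ℕ} {b : Fin n → ℕ}
    (ha : Antitone a) (hb : Antitone b) (k : ℕ) :
    #{j | k < a j ∧ k < b (Fin.castLE hn j)} = min #{j | k < a j} #{i | k < b i} := by
  have hprefix : ({j | k < a j ∧ k < b (Fin.castLE hn j)} : Finset (Fin s))
      = ({j | (j : ℕ) < min #{j | k < a j} #{i | k < b i}} : Finset (Fin s)) := by
    ext j
    simp only [mem_filter, mem_univ, true_and, ha.lt_apply_iff_lt_card k j,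
      hb.lt_apply_iff_lt_card k (Fin.castLE hn j), Fin.val_castLE, lt_min_iff]
  have hs : #{j | k < a j} ≤ s := (card_filter_le _ _).trans (card_fin s).le
  rw [hprefix, Fin.card_filter_val_lt]
  omega

theorem sum_min_le_sum_min_castLE {s n : ℕ} (hn : s ≤ n) {a : Fin s → ℕ} {b c : Fin n → ℕ}
    (ha : Antitone a) (hb : Antitone b) (hca : ∀ k, #{i | k < c i} = #{j | k < a j}) :
    ∑ i, min (c i) (b i) ≤ ∑ j, min (a j) (b (Fin.castLE hn j)) := by
  set N := ∑ i, c i + ∑ j, a j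
  rw [sum_min_eq_sum_card_filter c b N fun i => (single_le_sum (by simp) (mem_univ i)).trans
      (Nat.le_add_right _ _),
    sum_min_eq_sum_card_filter a _ N fun j => (single_le_sum (by simp) (mem_univ j)).trans
      (Nat.le_add_left _ _)]
  gcongr with k
  calc #{i | k < c i ∧ k < b i}
      ≤ min #{i | k < c i} #{i | k < b i} :=
        le_min (card_le_card (monotone_filter_right _ fun _ _ => And.left))
          (card_le_card (monotone_filter_right _ fun _ _ => And.right))
    _ = #{j | k < a j ∧ k < b (Fin.castLE hn j)} := by
        rw [hca, card_filter_lt_and_lt_castLE hn ha hb]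

lemma card_inter_le_sum_min_card_filter {α ι : Type*} [DecidableEq α] [Fintype ι] [DecidableEq ι]
    (f : α → ι) (E B : Finset α) :
    #(E ∩ B) ≤ ∑ i, min #(E.filter (f · = i)) #(B.filter (f · = i)) := by
  rw [card_eq_sum_card_fiberwise (f := f) (t := univ) fun _ _ => mem_univ _]
  gcongr with i
  exact le_min (card_le_card (filter_subset_filter _ inter_subset_left))
    (card_le_card (filter_subset_filter _ inter_subset_right))

lemma isEdge.card_filter_lt {n q s : ℕ} {a : Fin s → ℕ} {E : Finset (Fin n × Fin q)}
    (hE : isEdge a E) (k : ℕ) :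
    #{i | k < #(E.filter (·.1 = i))} = #{j | k < a j} := by
  have hlevel := congrArg (fun M => Multiset.card (Multiset.filter (k < ·) M)) hE
  simp only [Multiset.filter_filter] at hlevel
  rw [Multiset.filter_congr fun v _ => show k < v ∧ v ≠ 0 ↔ k < v by omega] at hlevel
  simpa only [← Multiset.countP_eq_card_filter, Multiset.countP_map, ← filter_val, card_val]
    using hlevel

lemma exists_subset_card_eq_card_inter_eq_min {α : Type*} [DecidableEq α] {U X : Finset α}
    (hXU : X ⊆ U) {t : ℕ} (ht : t ≤ #U) : ∃ S ⊆ U, #S = t ∧ #(S ∩ X) = min t #X := by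
  rcases le_total t #X with htX | hXt
  · obtain ⟨S, hSX, hS⟩ := exists_subset_card_eq htX
    exact ⟨S, hSX.trans hXU, hS, by rw [inter_eq_left.2 hSX, hS, min_eq_left htX]⟩
  · obtain ⟨S, hXS, hSU, hS⟩ := exists_subsuperset_card_eq hXU hXt ht
    exact ⟨S, hSU, hS, by rw [inter_eq_right.2 hXS, min_eq_right hXt]⟩

lemma isEdge_biUnion {n q s : ℕ} (e : Fin s ↪ Fin n) {a : Fin s → ℕ} (hpos : ∀ j, a j ≠ 0)
    (S : Fin s → Finset (Fin n × Fin q)) (hS : ∀ j, ∀ v ∈ S j, v.1 = e j)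
    (hcard : ∀ j, #(S j) = a j) : isEdge a (univ.biUnion S) := by
  set E := univ.biUnion S
  have hfiber : ∀ j, E.filter (·.1 = e j) = S j := by
    intro j
    ext v
    simp only [E, mem_filter, mem_biUnion, mem_univ, true_and]
    constructor
    · rintro ⟨⟨j', hv⟩, hvj⟩
      rwa [← e.injective ((hS j' v hv).symm.trans hvj)]
    · exact fun hv => ⟨⟨j, hv⟩, hS j v hv⟩
  have hsupport : univ.filter (fun i => #(E.filter (·.1 = i)) ≠ 0) = univ.map e := by
    ext i
    simp only [mem_filter, mem_univ, true_and, mem_map, ne_eq, card_eq_zero,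
      ← nonempty_iff_ne_empty]
    constructor
    · rintro ⟨v, hv⟩
      obtain ⟨⟨j, hvj⟩, rfl⟩ : (∃ j, v ∈ S j) ∧ v.1 = i := by
        simpa [E] using hv
      exact ⟨j, (hS j v hvj).symm⟩
    · rintro ⟨j, rfl⟩
      rw [hfiber, ← card_pos, hcard]
      exact Nat.pos_of_ne_zero (hpos j)
  unfold isEdge
  rw [Multiset.filter_map, ← filter_val]
  simp only [Function.comp_def, hsupport, map_val, Multiset.map_map, hfiber, hcard]

lemma exists_isEdge_card_inter_eq {n q s : ℕ} (e : Fin s ↪ Fin n) {a : Fin s → ℕ}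
    (hpos : ∀ j, a j ≠ 0) (haq : ∀ j, a j ≤ q) (B : Finset (Fin n × Fin q)) :
    ∃ E, isEdge a E ∧ #(E ∩ B) = ∑ j, min (a j) #(B.filter (·.1 = e j)) := by
  have hclass : ∀ i : Fin n, #(univ.filter fun v : Fin n × Fin q => v.1 = i) = q := fun i => by
    rw [show univ.filter (fun v : Fin n × Fin q => v.1 = i) = {i} ×ˢ univ by
        ext ⟨i', v⟩; simp [eq_comm],
      card_product, card_singleton, card_univ, Fintype.card_fin, one_mul]
  have hpart : ∀ j, ∃ S ⊆ univ.filter (fun v : Fin n × Fin q => v.1 = e j),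
      #S = a j ∧ #(S ∩ B.filter (·.1 = e j)) = min (a j) #(B.filter (·.1 = e j)) := fun j =>
    exists_subset_card_eq_card_inter_eq_min (filter_subset_filter _ (subset_univ B))
      ((haq j).trans (hclass _).ge)
  choose S hSclass hScard hSB using hpart
  have hS : ∀ j, ∀ v ∈ S j, v.1 = e j := fun j v hv => (mem_filter.1 (hSclass j hv)).2
  refine ⟨univ.biUnion S, isEdge_biUnion e hpos S hS hScard, ?_⟩
  rw [biUnion_inter, card_biUnion]
  · refine sum_congr rfl fun j _ => ?_
    rw [← hSB, inter_filter, filter_true_of_mem fun v hv => hS j v (mem_inter.1 hv).1]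
  · intro j _ j' _ hjj'
    refine disjoint_left.2 fun v hv hv' => hjj' (e.injective ?_)
    rw [← hS j v (mem_inter.1 hv).1, ← hS j' v (mem_inter.1 hv').1]

theorem stmt_15_general (n q s : ℕ) (a : Fin s → ℕ)
    (hs : 1 ≤ s)
    (hpos : ∀ i, 1 ≤ a i)
    (hmono : ∀ i j : Fin s, i ≤ j → a j ≤ a i)
    (hn : s ≤ n) (hq : a ⟨0, hs⟩ ≤ q)
    (B : Finset (Fin n × Fin q))
    (b : Fin n → ℕ)
    (hb : ∀ i, b i = (B.filter (fun v => v.1 = i)).card)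
    (hbmono : ∀ i j : Fin n, i ≤ j → b j ≤ b i) :
    IsGreatest
      {m | ∃ E : Finset (Fin n × Fin q), isEdge a E ∧ (E ∩ B).card = m}
      (∑ i : Fin s, min (a i) (b (Fin.castLE hn i))) := by
  obtain rfl : b = fun i => #(B.filter (·.1 = i)) := funext hb
  have haq : ∀ j, a j ≤ q := fun j => (hmono _ j (Fin.le_iff_val_le_val.2 (Nat.zero_le _))).trans hq
  refine ⟨exists_isEdge_card_inter_eq (Fin.castLEEmb hn)
    (fun j => Nat.one_le_iff_ne_zero.1 (hpos j)) haq B, ?_⟩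
  rintro m ⟨E, hE, rfl⟩
  exact (card_inter_le_sum_min_card_filter Prod.fst E B).trans
    (sum_min_le_sum_min_castLE hn hmono hbmono hE.card_filter_lt)

theorem stmt_15 (n r q s : ℕ) (a : Fin s → ℕ)
    (hs : 1 ≤ s)
    (hpos : ∀ i, 1 ≤ a i)
    (hmono : ∀ i j : Fin s, i ≤ j → a j ≤ a i)
    (hsum : ∑ i, a i = r)
    (hn : s ≤ n) (hq : a ⟨0, hs⟩ ≤ q)
    (B : Finset (Fin n × Fin q))
    (b : Fin n → ℕ)
    (hb : ∀ i, b i = (B.filter (fun v => v.1 = i)).card)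
    (hbmono : ∀ i j : Fin n, i ≤ j → b j ≤ b i) :
    IsGreatest
      {m | ∃ E : Finset (Fin n × Fin q), isEdge a E ∧ (E ∩ B).card = m}
      (∑ i : Fin s, min (a i) (b (Fin.castLE hn i))) :=
  stmt_15_general n q s a hs hpos hmono hn hq B b hb hbmono
end

section
/- Let $\sigma=(4,3,2)$, $r = 9$, and $H = H(n, 9, q \mid \sigma)$ with $n \ge 3$ and $q \ge 4$. Then the independence number of $H$ is $\alpha(H) = \max\{3n,\; 2q + n - 2\}$; in particular $\alpha(H) = 3n$ when $n \ge q$ and $\alpha(H) = 2q + n - 2$ when $q > n$. -/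
lemma aux_rhs : Multiset.map (![4,3,2] : Fin 3 → ℕ) (Finset.univ : Finset (Fin 3)).val
    = ({4,3,2} : Multiset ℕ) := by decide

lemma edge_facts {n q : ℕ} {E : Finset (Fin n × Fin q)}
    (hE : isEdge (![4, 3, 2] : Fin 3 → ℕ) E) :
    (∃ i, (E.filter (fun v => v.1 = i)).card = 4) ∧
    (Finset.univ.filter (fun i : Fin n => 2 ≤ (E.filter (fun v => v.1 = i)).card)).card = 3 := by
  unfold isEdge at hE
  rw [aux_rhs] at hE
  set c : Fin n → ℕ := fun i => (E.filter (fun v => v.1 = i)).card with hc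
  set m : Multiset ℕ := Multiset.map c (Finset.univ : Finset (Fin n)).val with hm
  constructor
  · have h4 : (4:ℕ) ∈ Multiset.filter (fun x => x ≠ 0) m := by rw [hE]; decide
    obtain ⟨i, _, hi⟩ := Multiset.mem_map.mp (Multiset.mem_filter.mp h4).1
    exact ⟨i, hi⟩
  · have key : Multiset.filter (fun x => 2 ≤ x) m
        = Multiset.filter (fun x => 2 ≤ x) (Multiset.filter (fun x => x ≠ 0) m) := by
      rw [Multiset.filter_filter]
      exact Multiset.filter_congr (fun x _ => by omega)
    have h1 : (Finset.univ.filter (fun i : Fin n => 2 ≤ c i)).card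
        = Multiset.card (Multiset.filter (fun x => 2 ≤ x) m) := by
      rw [hm, ← Multiset.countP_eq_card_filter, Multiset.countP_map,
        Finset.card, Finset.filter_val, ← Multiset.countP_eq_card_filter]
    rw [h1, key, hE]
    decide

lemma fiber_card_le {n q : ℕ} (S : Finset (Fin n × Fin q)) (i : Fin n) :
    (S.filter (fun v => v.1 = i)).card ≤ q := by
  have h := Finset.card_le_card_of_injOn (fun v => v.2)
    (fun v _ => Finset.mem_univ v.2) (s := S.filter (fun v => v.1 = i))
    (fun v hv w hw hvw => by
      have h1 := (Finset.mem_filter.mp hv).2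
      have h2 := (Finset.mem_filter.mp hw).2
      exact Prod.ext (h1.trans h2.symm) hvw)
  simpa using h

lemma exists_edge {n q : ℕ} {S : Finset (Fin n × Fin q)} {i j k : Fin n}
    (hij : i ≠ j) (hik : i ≠ k) (hjk : j ≠ k)
    (hi : 4 ≤ (S.filter (fun v => v.1 = i)).card)
    (hj : 3 ≤ (S.filter (fun v => v.1 = j)).card)
    (hk : 2 ≤ (S.filter (fun v => v.1 = k)).card) :
    ∃ E, isEdge (![4,3,2] : Fin 3 → ℕ) E ∧ E ⊆ S := by
  obtain ⟨Ti, hTiS, hTi⟩ := Finset.exists_subset_card_eq hi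
  obtain ⟨Tj, hTjS, hTj⟩ := Finset.exists_subset_card_eq hj
  obtain ⟨Tk, hTkS, hTk⟩ := Finset.exists_subset_card_eq hk
  have hTi1 : ∀ v ∈ Ti, v.1 = i := fun v hv => (Finset.mem_filter.mp (hTiS hv)).2
  have hTj1 : ∀ v ∈ Tj, v.1 = j := fun v hv => (Finset.mem_filter.mp (hTjS hv)).2
  have hTk1 : ∀ v ∈ Tk, v.1 = k := fun v hv => (Finset.mem_filter.mp (hTkS hv)).2
  refine ⟨Ti ∪ Tj ∪ Tk, ?_, ?_⟩
  · -- isEdge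
    have hfil : ∀ (T : Finset (Fin n × Fin q)) (a : Fin n), (∀ v ∈ T, v.1 = a) →
        ∀ l : Fin n, T.filter (fun v => v.1 = l) = if l = a then T else ∅ := by
      intro T a hTa l
      split
      · next h => subst h; exact Finset.filter_true_of_mem (fun v hv => hTa v hv)
      · next h => exact Finset.filter_false_of_mem (fun v hv => by
          rw [hTa v hv]; exact fun hh => h hh.symm)
    have hcE : ∀ l : Fin n, (((Ti ∪ Tj ∪ Tk)).filter (fun v => v.1 = l)).card
        = (if l = i then 4 else if l = j then 3 else if l = k then 2 else 0) := by
      intro l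
      rw [Finset.filter_union, Finset.filter_union, hfil Ti i hTi1 l,
        hfil Tj j hTj1 l, hfil Tk k hTk1 l]
      by_cases h1 : l = i
      · subst h1
        rw [if_pos rfl, if_pos rfl, if_neg hij, if_neg hik]
        simpa using hTi
      · rw [if_neg h1, if_neg h1]
        by_cases h2 : l = j
        · subst h2
          rw [if_pos rfl, if_pos rfl, if_neg hjk]
          simpa using hTj
        · rw [if_neg h2, if_neg h2]
          by_cases h3 : l = k
          · subst h3
            rw [if_pos rfl, if_pos rfl]
            simpa using hTk
          · rw [if_neg h3, if_neg h3]
            simp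
    unfold isEdge
    rw [aux_rhs]
    have hmapc : Multiset.map (fun l => (((Ti ∪ Tj ∪ Tk)).filter (fun v => v.1 = l)).card)
        (Finset.univ : Finset (Fin n)).val
        = Multiset.map (fun l => if l = i then 4 else if l = j then 3 else if l = k then 2 else 0)
          (Finset.univ : Finset (Fin n)).val :=
      Multiset.map_congr rfl (fun l _ => hcE l)
    rw [hmapc]
    set g : Fin n → ℕ := fun l => if l = i then 4 else if l = j then 3 else if l = k then 2 else 0 with hg
    set T : Finset (Fin n) := {i, j, k} with hTdef
    have hTsub : T ⊆ Finset.univ := Finset.subset_univ T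
    have hTval : T.val = i ::ₘ j ::ₘ k ::ₘ 0 := by
      rw [hTdef]
      rw [Finset.insert_val_of_notMem (by simp [hij, hik]),
        Finset.insert_val_of_notMem (by simp [hjk])]
      rfl
    have hsplit : (Finset.univ : Finset (Fin n)).val = T.val + (Finset.univ \ T).val := by
      rw [Finset.sdiff_val]
      rw [add_tsub_cancel_of_le (Finset.val_le_iff.mpr hTsub)]
    rw [hsplit, Multiset.map_add, Multiset.filter_add]
    have e1 : g i = 4 := by simp [hg]
    have e2 : g j = 3 := by simp [hg, Ne.symm hij]
    have e3 : g k = 2 := by simp [hg, Ne.symm hik, Ne.symm hjk]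
    have hmapT : Multiset.map g T.val = (4 ::ₘ 3 ::ₘ 2 ::ₘ 0 : Multiset ℕ) := by
      rw [hTval]
      simp only [Multiset.map_cons, Multiset.map_zero, e1, e2, e3]
    have hrest : Multiset.filter (fun x => x ≠ 0) (Multiset.map g (Finset.univ \ T).val) = 0 := by
      rw [Multiset.filter_eq_nil]
      intro a ha
      obtain ⟨l, hl, rfl⟩ := Multiset.mem_map.mp ha
      have hlmem : l ∈ Finset.univ \ T := hl
      have := Finset.mem_sdiff.mp hlmem
      have hlT : l ∉ T := this.2
      rw [hTdef] at hlT
      simp only [Finset.mem_insert, Finset.mem_singleton] at hlT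
      push_neg at hlT
      rw [hg]
      simp [hlT.1, hlT.2.1, hlT.2.2]
    rw [hmapT, hrest]
    decide
  · intro v hv
    rcases Finset.mem_union.mp hv with h | h
    · rcases Finset.mem_union.mp h with h' | h'
      · exact Finset.filter_subset _ _ (hTiS h')
      · exact Finset.filter_subset _ _ (hTjS h')
    · exact Finset.filter_subset _ _ (hTkS h)

lemma upper_bound {n q : ℕ} (hn : 3 ≤ n) (hq : 4 ≤ q) (S : Finset (Fin n × Fin q))
    (hS : ∀ E : Finset (Fin n × Fin q), isEdge (![4, 3, 2] : Fin 3 → ℕ) E → ¬ E ⊆ S) :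
    S.card ≤ max (3 * n) (2 * q + n - 2) := by
  set c : Fin n → ℕ := fun i => (S.filter (fun v => v.1 = i)).card with hc
  have hsum : S.card = ∑ i, c i :=
    Finset.card_eq_sum_card_fiberwise (fun x _ => Finset.mem_univ x.1)
  have hcq : ∀ i, c i ≤ q := fun i => fiber_card_le S i
  have hno : ∀ i j k : Fin n, i ≠ j → i ≠ k → j ≠ k →
      ¬(4 ≤ c i ∧ 3 ≤ c j ∧ 2 ≤ c k) := by
    rintro i j k hij hik hjk ⟨h1, h2, h3⟩
    obtain ⟨E, hE, hES⟩ := exists_edge hij hik hjk h1 h2 h3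
    exact hS E hE hES
  have hA := le_max_left (3 * n) (2 * q + n - 2)
  have hB := le_max_right (3 * n) (2 * q + n - 2)
  by_cases h1 : ∀ i, c i ≤ 3
  · have : S.card ≤ 3 * n := by
      rw [hsum]
      calc ∑ i, c i ≤ ∑ _i : Fin n, 3 := Finset.sum_le_sum (fun i _ => h1 i)
        _ = 3 * n := by simp [Finset.sum_const, Finset.card_univ, mul_comm]
    omega
  · push_neg at h1
    obtain ⟨i₀, hi₀⟩ := h1
    by_cases h2 : ∀ j, j ≠ i₀ → c j ≤ 2
    · have hb : ∑ i, c i ≤ q + 2 * (n - 1) := by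
        calc ∑ i, c i ≤ ∑ i, (if i = i₀ then q else 2) :=
          Finset.sum_le_sum (fun i _ => by
            split
            · exact hcq i
            · exact h2 i ‹_›)
        _ = q + 2 * (n - 1) := by
          rw [Finset.sum_eq_add_sum_sdiff_singleton_of_mem (Finset.mem_univ i₀)]
          rw [if_pos rfl]
          congr 1
          rw [Finset.sum_congr rfl (fun x hx => by
            rw [if_neg (by simpa using (Finset.mem_sdiff.mp hx).2)])]
          rw [Finset.sum_const, Finset.card_sdiff_of_subset (by simp), Finset.card_univ,
            Fintype.card_fin, Finset.card_singleton, smul_eq_mul, mul_comm]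
      rw [hsum]; omega
    · push_neg at h2
      obtain ⟨j₀, hj₀ne, hj₀⟩ := h2
      have h3 : ∀ l, l ≠ i₀ → l ≠ j₀ → c l ≤ 1 := by
        intro l hl1 hl2
        by_contra hl
        push_neg at hl
        exact hno i₀ j₀ l (Ne.symm hj₀ne) (Ne.symm hl1) (Ne.symm hl2)
          ⟨by omega, by omega, by omega⟩
      have hb : ∑ i, c i ≤ q + q + (n - 2) := by
        calc ∑ i, c i ≤ ∑ i, (if i = i₀ then q else if i = j₀ then q else 1) :=
          Finset.sum_le_sum (fun i _ => by
            split
            · exact hcq i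
            · split
              · exact hcq i
              · exact h3 i ‹_› ‹_›)
        _ = q + q + (n - 2) := by
          rw [Finset.sum_eq_add_sum_sdiff_singleton_of_mem (Finset.mem_univ i₀)]
          rw [if_pos rfl]
          have hj₀mem : j₀ ∈ Finset.univ \ {i₀} := by simp [hj₀ne]
          rw [Finset.sum_eq_add_sum_sdiff_singleton_of_mem hj₀mem]
          rw [if_neg hj₀ne, if_pos rfl, ← add_assoc]
          congr 1
          rw [Finset.sum_congr rfl (fun x hx => by
            have hx' := Finset.mem_sdiff.mp hx
            have hx1 := Finset.mem_sdiff.mp hx'.1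
            rw [if_neg (by simpa using hx1.2), if_neg (by simpa using hx'.2)])]
          rw [Finset.sum_const, smul_eq_mul, mul_one]
          rw [Finset.card_sdiff_of_subset (by simp [hj₀ne]), Finset.card_sdiff_of_subset (by simp),
            Finset.card_univ, Fintype.card_fin, Finset.card_singleton, Finset.card_singleton]
          omega
      rw [hsum]; omega

lemma construction_3n {n q : ℕ} (hn : 3 ≤ n) (hq : 4 ≤ q) :
    ∃ S : Finset (Fin n × Fin q),
      (∀ E : Finset (Fin n × Fin q), isEdge (![4, 3, 2] : Fin 3 → ℕ) E → ¬ E ⊆ S)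
        ∧ S.card = 3 * n := by
  set T : Finset (Fin q) := {⟨0, by omega⟩, ⟨1, by omega⟩, ⟨2, by omega⟩} with hTdef
  have hT : T.card = 3 := by
    rw [hTdef, Finset.card_insert_of_notMem (by simp [Fin.ext_iff]),
      Finset.card_insert_of_notMem (by simp [Fin.ext_iff]), Finset.card_singleton]
  refine ⟨Finset.univ ×ˢ T, ?_, ?_⟩
  · intro E hE hES
    obtain ⟨⟨i, hi4⟩, -⟩ := edge_facts hE
    have hsub : E.filter (fun v => v.1 = i) ⊆ ({i} : Finset (Fin n)) ×ˢ T := by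
      intro v hv
      have hv' := Finset.mem_filter.mp hv
      have hvS := hES hv'.1
      rw [Finset.mem_product] at hvS ⊢
      exact ⟨Finset.mem_singleton.mpr hv'.2, hvS.2⟩
    have := Finset.card_le_card hsub
    rw [hi4, Finset.card_product, Finset.card_singleton, one_mul, hT] at this
    omega
  · rw [Finset.card_product, Finset.card_univ, Fintype.card_fin, hT]
    ring

lemma construction_2q {n q : ℕ} (hn : 3 ≤ n) (hq : 4 ≤ q) :
    ∃ S : Finset (Fin n × Fin q),
      (∀ E : Finset (Fin n × Fin q), isEdge (![4, 3, 2] : Fin 3 → ℕ) E → ¬ E ⊆ S)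
        ∧ S.card = 2 * q + (n - 2) := by
  set i0 : Fin n := ⟨0, by omega⟩ with hi0
  set i1 : Fin n := ⟨1, by omega⟩ with hi1
  have hi01 : i0 ≠ i1 := by simp [hi0, hi1, Fin.ext_iff]
  set A : Finset (Fin n) := {i0, i1} with hAdef
  have hA : A.card = 2 := by
    rw [hAdef, Finset.card_insert_of_notMem (by simp [hi01]), Finset.card_singleton]
  set z : Fin q := ⟨0, by omega⟩ with hz
  refine ⟨(A ×ˢ Finset.univ) ∪ ((Finset.univ \ A) ×ˢ {z}), ?_, ?_⟩
  · intro E hE hES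
    obtain ⟨-, hcount⟩ := edge_facts hE
    have hsub : Finset.univ.filter
        (fun i : Fin n => 2 ≤ (E.filter (fun v => v.1 = i)).card) ⊆ A := by
      intro l hl
      by_contra hlA
      have hcl := (Finset.mem_filter.mp hl).2
      have hsub2 : E.filter (fun v => v.1 = l) ⊆ {(l, z)} := by
        intro v hv
        have hv' := Finset.mem_filter.mp hv
        have hvS := hES hv'.1
        rcases Finset.mem_union.mp hvS with h | h
        · exfalso
          have := (Finset.mem_product.mp h).1
          rw [hv'.2] at this
          exact hlA this
        · have h2 := (Finset.mem_product.mp h).2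
          rw [Finset.mem_singleton] at h2
          rw [Finset.mem_singleton]
          exact Prod.ext hv'.2 h2
      have := Finset.card_le_card hsub2
      rw [Finset.card_singleton] at this
      omega
    have := Finset.card_le_card hsub
    rw [hcount, hA] at this
    omega
  · rw [Finset.card_union_of_disjoint (by
      rw [Finset.disjoint_left]
      intro v hv hv2
      have h1 := (Finset.mem_product.mp hv).1
      have h2 := (Finset.mem_product.mp hv2).1
      exact (Finset.mem_sdiff.mp h2).2 h1)]
    rw [Finset.card_product, Finset.card_product, Finset.card_univ, Fintype.card_fin,
      Finset.card_singleton, mul_one, hA, Finset.card_sdiff_of_subset (by simp), Finset.card_univ,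
      Fintype.card_fin, hA, two_mul]

theorem stmt_18 (n q : ℕ) (hn : 3 ≤ n) (hq : 4 ≤ q) :
    IsGreatest
      {m | ∃ S : Finset (Fin n × Fin q),
        (∀ E : Finset (Fin n × Fin q), isEdge (![4, 3, 2] : Fin 3 → ℕ) E → ¬ E ⊆ S)
          ∧ S.card = m}
      (max (3 * n) (2 * q + n - 2)) ∧
    (q ≤ n → max (3 * n) (2 * q + n - 2) = 3 * n) ∧
    (n < q → max (3 * n) (2 * q + n - 2) = 2 * q + n - 2) := by
  refine ⟨⟨?_, ?_⟩, ?_, ?_⟩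
  · rcases le_total (2 * q + n - 2) (3 * n) with h | h
    · rw [max_eq_left h]
      exact construction_3n hn hq
    · rw [max_eq_right h]
      obtain ⟨S, hind, hcard⟩ := construction_2q hn hq
      exact ⟨S, hind, by omega⟩
  · rintro m ⟨S, hind, rfl⟩
    exact upper_bound hn hq S hind
  · intro h
    exact max_eq_left (by omega)
  · intro h
    exact max_eq_right (by omega)
end

section
/- Let $H = H(n, r, q \mid \sigma)$ with $\sigma = (a_1, \dots, a_s)$, $\gcd(a_1,\dots,a_s) = d \ge 2$, and $q = md$ with $m \ge 1$. Let $\sigma^* = (a_1/d, \dots, a_s/d)$, a partition of $r/d$, and $H^* = H(n, r/d, m \mid \sigma^*)$. Then $\nu(H) = \nu(H^*)$, where $\nu$ denotes the maximum matching size. -/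
open Finset

/-- number of vertices of `K` in class `i` -/
def cnt {n q : ℕ} (K : Finset (Fin n × Fin q)) (i : Fin n) : ℕ :=
  (K.filter (fun v => v.1 = i)).card

lemma isEdge_def {n q s : ℕ} (a : Fin s → ℕ) (K : Finset (Fin n × Fin q)) :
    isEdge a K ↔
      Multiset.filter (fun x => x ≠ 0) (Multiset.map (cnt K) (univ : Finset (Fin n)).val)
        = Multiset.map a (univ : Finset (Fin s)).val := Iff.rfl

lemma edge_cnt_mem {n q s : ℕ} {a : Fin s → ℕ} {K : Finset (Fin n × Fin q)}
    (h : isEdge a K) (i : Fin n) (hi : cnt K i ≠ 0) : ∃ j, a j = cnt K i := by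
  have hmem : cnt K i ∈ Multiset.filter (fun x => x ≠ 0)
      (Multiset.map (cnt K) (univ : Finset (Fin n)).val) := by
    rw [Multiset.mem_filter]
    exact ⟨Multiset.mem_map_of_mem _ (mem_univ i), hi⟩
  rw [isEdge_def] at h
  rw [h, Multiset.mem_map] at hmem
  obtain ⟨j, -, hj⟩ := hmem
  exact ⟨j, hj⟩

lemma edge_transform {n q q' s : ℕ} (a b : Fin s → ℕ) (g : ℕ → ℕ)
    (K : Finset (Fin n × Fin q)) (K' : Finset (Fin n × Fin q'))
    (hK : isEdge a K)
    (hcnt : ∀ i, cnt K' i = g (cnt K i))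
    (hiff : ∀ i, g (cnt K i) ≠ 0 ↔ cnt K i ≠ 0)
    (hab : ∀ j, g (a j) = b j) : isEdge b K' := by
  rw [isEdge_def] at hK ⊢
  have h1 : Multiset.map (cnt K') (univ : Finset (Fin n)).val
      = Multiset.map (fun i => g (cnt K i)) (univ : Finset (Fin n)).val :=
    Multiset.map_congr rfl (fun i _ => hcnt i)
  rw [h1]
  have h2 : Multiset.map (fun i => g (cnt K i)) (univ : Finset (Fin n)).val
      = Multiset.map g (Multiset.map (cnt K) (univ : Finset (Fin n)).val) := by
    rw [Multiset.map_map]; rfl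
  rw [h2, Multiset.filter_map]
  have h3 : Multiset.filter ((fun x => x ≠ 0) ∘ g) (Multiset.map (cnt K) (univ : Finset (Fin n)).val)
      = Multiset.filter (fun x => x ≠ 0) (Multiset.map (cnt K) (univ : Finset (Fin n)).val) := by
    rw [Multiset.filter_map, Multiset.filter_map]
    congr 1
    refine Multiset.filter_congr (fun i _ => ?_)
    exact hiff i
  rw [h3, hK, Multiset.map_map]
  exact Multiset.map_congr rfl (fun j _ => hab j)

lemma edge_nonempty {n q s : ℕ} {a : Fin s → ℕ} {K : Finset (Fin n × Fin q)}
    (hs : 1 ≤ s) (h : isEdge a K) : K.Nonempty := by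
  rw [isEdge_def] at h
  have : (Multiset.map a (univ : Finset (Fin s)).val) ≠ 0 := by
    simp only [ne_eq, Multiset.map_eq_zero]
    intro hc
    have := congrArg Multiset.card hc
    simp at this
    omega
  rw [← h] at this
  obtain ⟨x, hx⟩ := Multiset.exists_mem_of_ne_zero this
  rw [Multiset.mem_filter, Multiset.mem_map] at hx
  obtain ⟨⟨i, -, hi⟩, hne⟩ := hx
  rw [← hi] at hne
  have : (K.filter (fun v => v.1 = i)).Nonempty := Finset.card_pos.mp (Nat.pos_of_ne_zero hne)
  obtain ⟨v, hv⟩ := this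
  exact ⟨v, (mem_filter.mp hv).1⟩

lemma cnt_filter_mem {n q : ℕ} (t : Fin n → Finset (Fin q)) (i : Fin n) :
    cnt ((univ : Finset (Fin n × Fin q)).filter (fun v => v.2 ∈ t v.1)) i = (t i).card := by
  unfold cnt
  rw [filter_filter]
  refine Finset.card_bij (fun v _ => v.2) ?_ ?_ ?_
  · intro v hv
    simp only [mem_filter, mem_univ, true_and] at hv
    rw [hv.2] at hv; exact hv.1
  · intro v1 h1 v2 h2 h
    simp only [mem_filter, mem_univ, true_and] at h1 h2
    exact Prod.ext (h1.2.trans h2.2.symm) h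
  · intro x hx
    exact ⟨(i, x), by simp [hx], rfl⟩

lemma card_filter_val_mem {q : ℕ} (t : Finset ℕ) (ht : ∀ x ∈ t, x < q) :
    ((univ : Finset (Fin q)).filter (fun j => j.val ∈ t)).card = t.card := by
  refine Finset.card_bij (fun v _ => v.val) ?_ ?_ ?_
  · intro v hv; exact (mem_filter.mp hv).2
  · intro v1 h1 v2 h2 h; exact Fin.ext h
  · intro x hx; exact ⟨⟨x, ht x hx⟩, by simp [hx], rfl⟩

lemma cnt_univ {n q : ℕ} (i : Fin n) : cnt (univ : Finset (Fin n × Fin q)) i = q := by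
  have h2 := cnt_filter_mem (fun _ : Fin n => (univ : Finset (Fin q))) i
  simpa using h2

lemma matching_capacity {n q s : ℕ} {a : Fin s → ℕ} {M : Finset (Finset (Fin n × Fin q))}
    (h : isMatching a M) (i : Fin n) : ∑ E ∈ M, cnt E i ≤ q := by
  classical
  have hdisj : ∀ E ∈ M, ∀ F ∈ M, E ≠ F →
      Disjoint (E.filter (fun v => v.1 = i)) (F.filter (fun v => v.1 = i)) := by
    intro E hE F hF hne
    exact (h.2 E hE F hF hne).mono (filter_subset _ _) (filter_subset _ _)
  rw [show ∑ E ∈ M, cnt E i = (M.biUnion (fun E => E.filter (fun v => v.1 = i))).card from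
    (Finset.card_biUnion hdisj).symm]
  have hsub : M.biUnion (fun E => E.filter (fun v => v.1 = i))
      ⊆ (univ : Finset (Fin n × Fin q)).filter (fun v => v.1 = i) := by
    rw [Finset.biUnion_subset]
    intro E _
    intro v hv
    simp only [mem_filter, mem_univ, true_and]
    exact (mem_filter.mp hv).2
  calc (M.biUnion (fun E => E.filter (fun v => v.1 = i))).card
      ≤ ((univ : Finset (Fin n × Fin q)).filter (fun v => v.1 = i)).card := card_le_card hsub
    _ = q := cnt_univ i

lemma expansion {n q s d m : ℕ} (a : Fin s → ℕ) (hd0 : 0 < d) (hda : ∀ j, d ∣ a j)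
    (hq : q = m * d)
    (M : Finset (Finset (Fin n × Fin m))) (hM : isMatching (fun i => a i / d) M) :
    ∃ M' : Finset (Finset (Fin n × Fin q)), isMatching a M' ∧ M'.card = M.card := by
  classical
  let e2 : Fin m × Fin d ≃ Fin q := finProdFinEquiv.trans (finCongr hq.symm)
  let emb : (Fin n × Fin m) × Fin d ↪ Fin n × Fin q :=
    ⟨fun x => (x.1.1, e2 (x.1.2, x.2)), by
      intro x y hxy
      simp only [Prod.mk.injEq] at hxy
      have h2 := e2.injective hxy.2
      simp only [Prod.mk.injEq] at h2
      exact Prod.ext (Prod.ext hxy.1 h2.1) h2.2⟩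
  let ex : Finset (Fin n × Fin m) → Finset (Fin n × Fin q) :=
    fun F => (F ×ˢ (univ : Finset (Fin d))).map emb
  have hprod : ∀ (F : Finset (Fin n × Fin m)) (i : Fin n),
      ((F ×ˢ (univ : Finset (Fin d))).filter (fun x => x.1.1 = i))
        = (F.filter (fun v => v.1 = i)) ×ˢ (univ : Finset (Fin d)) := by
    intro F i
    ext x
    simp only [mem_filter, mem_product, mem_univ, and_true, true_and]

  have hcnt : ∀ F i, cnt (ex F) i = cnt F i * d := by
    intro F i
    unfold cnt
    show ((Finset.map emb _).filter (fun v => v.1 = i)).card = _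
    rw [Finset.filter_map, card_map]
    have h0 : Finset.filter ((fun (v : Fin n × Fin q) => v.1 = i) ∘ ⇑emb) (F ×ˢ (univ : Finset (Fin d)))
        = Finset.filter (fun x => x.1.1 = i) (F ×ˢ (univ : Finset (Fin d))) :=
      Finset.filter_congr (fun x _ => Iff.rfl)
    rw [h0, hprod, card_product, card_univ, Fintype.card_fin]
  have hinj : Function.Injective ex := by
    intro F F' h
    have h2 := Finset.map_injective emb h
    ext v
    constructor
    · intro hv
      have : (v, (⟨0, hd0⟩ : Fin d)) ∈ F' ×ˢ (univ : Finset (Fin d)) := by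
        rw [← h2]; exact mem_product.mpr ⟨hv, mem_univ _⟩
      exact (mem_product.mp this).1
    · intro hv
      have : (v, (⟨0, hd0⟩ : Fin d)) ∈ F ×ˢ (univ : Finset (Fin d)) := by
        rw [h2]; exact mem_product.mpr ⟨hv, mem_univ _⟩
      exact (mem_product.mp this).1
  refine ⟨M.image ex, ⟨?_, ?_⟩, Finset.card_image_of_injective M hinj⟩
  · intro E hE
    obtain ⟨F, hF, rfl⟩ := Finset.mem_image.mp hE
    refine edge_transform (fun i => a i / d) a (· * d) F (ex F) (hM.1 F hF)
      (hcnt F) (fun i => ?_) (fun j => Nat.div_mul_cancel (hda j))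
    constructor
    · intro h hc; rw [hc] at h; simp at h
    · intro h
      simp only [ne_eq, Nat.mul_eq_zero, not_or]
      exact ⟨h, hd0.ne'⟩
  · intro E hE F hF hne
    obtain ⟨E0, hE0, rfl⟩ := Finset.mem_image.mp hE
    obtain ⟨F0, hF0, rfl⟩ := Finset.mem_image.mp hF
    have hne0 : E0 ≠ F0 := fun h => hne (by rw [h])
    have hdisj : Disjoint E0 F0 := hM.2 E0 hE0 F0 hF0 hne0
    rw [Finset.disjoint_map]
    rw [Finset.disjoint_left]
    intro x hx hx'
    exact (Finset.disjoint_left.mp hdisj) (mem_product.mp hx).1 (mem_product.mp hx').1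

lemma contraction {n q s d m : ℕ} (a : Fin s → ℕ) (hs : 1 ≤ s) (hd0 : 0 < d)
    (hda : ∀ j, d ∣ a j) (hq : q = m * d)
    (M : Finset (Finset (Fin n × Fin q))) (hM : isMatching a M) :
    ∃ T : Finset (Finset (Fin n × Fin m)), isMatching (fun i => a i / d) T ∧
      T.card = M.card ∧
      ∀ F ∈ T, ∀ v ∈ F, v.2.val < (∑ E ∈ M, cnt E v.1) / d := by
  classical
  induction M using Finset.induction_on with
  | empty =>
      exact ⟨∅, ⟨by simp, by simp⟩, by simp, by simp⟩
  | @insert E M' hEM' ih =>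
      have hM' : isMatching a M' := by
        refine ⟨fun F hF => hM.1 F (mem_insert_of_mem hF), fun F hF G hG => ?_⟩
        exact hM.2 F (mem_insert_of_mem hF) G (mem_insert_of_mem hG)
      obtain ⟨T, hT, hTcard, hTbound⟩ := ih hM'
      -- divisibility of counts
      have hdvd : ∀ E' ∈ insert E M', ∀ i, d ∣ cnt E' i := by
        intro E' hE' i
        by_cases h0 : cnt E' i = 0
        · rw [h0]; exact dvd_zero d
        · obtain ⟨j, hj⟩ := edge_cnt_mem (hM.1 E' hE') i h0
          rw [← hj]; exact hda j
      have hEmem : E ∈ insert E M' := mem_insert_self E M'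
      have hdvdsum : ∀ i, d ∣ ∑ E' ∈ M', cnt E' i := by
        intro i
        exact Finset.dvd_sum (fun E' hE' => hdvd E' (mem_insert_of_mem hE') i)
      set o : Fin n → ℕ := fun i => (∑ E' ∈ M', cnt E' i) / d with ho
      have ho' : ∀ i, o i = (∑ E' ∈ M', cnt E' i) / d := fun i => by rw [ho]
      have htot : ∀ i, (∑ E' ∈ insert E M', cnt E' i) / d = cnt E i / d + o i := by
        intro i
        rw [Finset.sum_insert hEM', Nat.add_div_of_dvd_right (hdvd E hEmem i)]
      have hcap : ∀ i, o i + cnt E i / d ≤ m := by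
        intro i
        have h1 : ∑ E' ∈ insert E M', cnt E' i ≤ m * d := hq ▸ matching_capacity hM i
        have h2 := Nat.div_le_div_right (c := d) h1
        rw [htot i, Nat.mul_div_cancel m hd0] at h2
        rw [Nat.add_comm]
        exact h2
      set t : Fin n → Finset (Fin m) :=
        fun i => (univ : Finset (Fin m)).filter
          (fun j => j.val ∈ Finset.Ico (o i) (o i + cnt E i / d)) with htdef
      set Estar : Finset (Fin n × Fin m) :=
        (univ : Finset (Fin n × Fin m)).filter (fun v => v.2 ∈ t v.1) with hEstar
      have hcnt : ∀ i, cnt Estar i = cnt E i / d := by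
        intro i
        rw [hEstar, cnt_filter_mem, htdef]
        rw [card_filter_val_mem _ (fun x hx => by
          rw [Finset.mem_Ico] at hx
          exact lt_of_lt_of_le hx.2 (hcap i))]
        rw [Nat.card_Ico]
        exact Nat.add_sub_cancel_left _ _
      have hEdge : isEdge (fun i => a i / d) Estar := by
        refine edge_transform a (fun i => a i / d) (· / d) E Estar (hM.1 E hEmem)
          hcnt (fun i => ?_) (fun j => rfl)
        constructor
        · intro h hc; rw [hc] at h; simp at h
        · intro h
          have h2 : d ≤ cnt E i := Nat.le_of_dvd (Nat.pos_of_ne_zero h) (hdvd E hEmem i)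
          exact (Nat.div_pos h2 hd0).ne'
      have hmemE : ∀ v ∈ Estar, o v.1 ≤ v.2.val ∧ v.2.val < o v.1 + cnt E v.1 / d := by
        intro v hv
        rw [hEstar, mem_filter] at hv
        have := hv.2
        rw [htdef, mem_filter, Finset.mem_Ico] at this
        exact this.2
      have hdisjT : ∀ F ∈ T, Disjoint Estar F := by
        intro F hF
        rw [Finset.disjoint_left]
        intro v hv hvF
        have h1 := (hmemE v hv).1
        have h2 := hTbound F hF v hvF
        rw [← ho' v.1] at h2
        exact absurd h2 (not_lt.mpr h1)
      have hne : Estar.Nonempty := edge_nonempty hs hEdge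
      have hnotmem : Estar ∉ T := by
        intro hc
        have := hdisjT Estar hc
        rw [disjoint_self] at this
        rw [this] at hne
        simp at hne
      refine ⟨insert Estar T, ⟨?_, ?_⟩, ?_, ?_⟩
      · intro F hF
        rcases Finset.mem_insert.mp hF with h | h
        · rw [h]; exact hEdge
        · exact hT.1 F h
      · intro F hF G hG hne2
        rcases Finset.mem_insert.mp hF with h | h <;>
          rcases Finset.mem_insert.mp hG with h' | h'
        · exact absurd (h.trans h'.symm) hne2
        · rw [h]; exact hdisjT G h'
        · rw [h']; exact (hdisjT F h).symm
        · exact hT.2 F h G h' hne2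
      · rw [Finset.card_insert_of_notMem hnotmem,
          Finset.card_insert_of_notMem hEM', hTcard]
      · intro F hF v hv
        rw [htot v.1]
        rcases Finset.mem_insert.mp hF with h | h
        · rw [h] at hv
          have h2 := (hmemE v hv).2
          rw [Nat.add_comm] at h2
          exact h2
        · have h2 := hTbound F h v hv
          rw [← ho' v.1] at h2
          exact lt_of_lt_of_le h2 (Nat.le_add_left _ _)

theorem stmt_19 (n r q s d m : ℕ) (a : Fin s → ℕ)
    (hs : 1 ≤ s)
    (hpos : ∀ i, 1 ≤ a i)
    (hmono : ∀ i j : Fin s, i ≤ j → a j ≤ a i)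
    (hsum : ∑ i, a i = r)
    (hd : d = Finset.univ.gcd a) (hd2 : 2 ≤ d)
    (hm : 1 ≤ m) (hq : q = m * d)
    (hn : s ≤ n) :
    ∀ N : ℕ,
      IsGreatest
        {x | ∃ M : Finset (Finset (Fin n × Fin q)),
          isMatching a M ∧ M.card = x} N ↔
      IsGreatest
        {x | ∃ M : Finset (Finset (Fin n × Fin m)),
          isMatching (fun i => a i / d) M ∧ M.card = x} N := by
  have hda : ∀ j, d ∣ a j := fun j => hd ▸ Finset.gcd_dvd (mem_univ j)
  have hd0 : 0 < d := by omega
  have hset : {x | ∃ M : Finset (Finset (Fin n × Fin q)),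
          isMatching a M ∧ M.card = x}
      = {x | ∃ M : Finset (Finset (Fin n × Fin m)),
          isMatching (fun i => a i / d) M ∧ M.card = x} := by
    ext x
    constructor
    · rintro ⟨M, hM, rfl⟩
      obtain ⟨T, h1, h2, -⟩ := contraction a hs hd0 hda hq M hM
      exact ⟨T, h1, h2⟩
    · rintro ⟨M, hM, rfl⟩
      obtain ⟨T, h1, h2⟩ := expansion a hd0 hda hq M hM
      exact ⟨T, h1, h2⟩
  intro N
  rw [hset]
end
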